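/- arXiv:0901.1175 — 2 statements merged into one kernel-verified Lean document; each statement's English description precedes it below -/
import Mathlib

section
/- For every positive integer n, the cardinality of {(α, β) : α, β ∈ NC(n), α ≪ β} equals Σ_{α ∈ NC(n)} 2^{i(α)}, where i(α) denotes the number of inner blocks of α; consequently Σ_{α ∈ NC(n)} 2^{i(α)} = Σ_{β ∈ NC(n)} ∏_{W block of β} Cat_{|W|−1}. -/
open scoped Classical

/-- The minimum of a finset of naturals (`0` if empty). -/
noncomputable def fmin (A : Finset ℕ) : ℕ := sInf (A : Set ℕ)

/-- The maximum of a finset of naturals (`0` if empty). -/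
noncomputable def fmax (A : Finset ℕ) : ℕ := sSup (A : Set ℕ)

/-- `α` is a partition of the finite set `F ⊆ ℕ`. -/
def IsPartitionOfSet (F : Finset ℕ) (α : Finset (Finset ℕ)) : Prop :=
  (∀ V ∈ α, V.Nonempty) ∧ (∀ V ∈ α, V ⊆ F) ∧ (∀ m ∈ F, ∃ V ∈ α, m ∈ V) ∧
    ∀ V ∈ α, ∀ W ∈ α, V ≠ W → V ∩ W = ∅

/-- `α` is a partition of `{1,…,n}`. -/
def IsPartitionOf (n : ℕ) (α : Finset (Finset ℕ)) : Prop :=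
  IsPartitionOfSet (Finset.Icc 1 n) α

/-- Two distinct blocks of the family `π` cross: there are `a < b < c < d` with
`a, c` in one block and `b, d` in a different block. -/
def IsCrossing (π : Finset (Finset ℕ)) : Prop :=
  ∃ A ∈ π, ∃ B ∈ π, A ≠ B ∧
    ∃ a ∈ A, ∃ b ∈ B, ∃ c ∈ A, ∃ d ∈ B, a < b ∧ b < c ∧ c < d

/-- `α ∈ NC(n)`: a non-crossing partition of `{1,…,n}`. -/
def IsNCPartition (n : ℕ) (α : Finset (Finset ℕ)) : Prop :=
  IsPartitionOf n α ∧ ¬ IsCrossing α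

/-- Reverse refinement order `α ≤ β`: every block of `α` is contained in a block of `β`
(equivalently, every block of `β` is a union of blocks of `α`). -/
def Refines (α β : Finset (Finset ℕ)) : Prop := ∀ V ∈ α, ∃ W ∈ β, V ⊆ W

/-- The partial order `α ≪ β`: `α ≤ β` and for every block `W` of `β` there is a block
`V` of `α` containing both `min W` and `max W`. -/
def LL (α β : Finset (Finset ℕ)) : Prop :=
  Refines α β ∧ ∀ W ∈ β, ∃ V ∈ α, fmin W ∈ V ∧ fmax W ∈ V

/-- A block `V` (of `α`) is `β`-special: some block `W` of `β` has the same min and max. -/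
def SpecialBlock (β : Finset (Finset ℕ)) (V : Finset ℕ) : Prop :=
  ∃ W ∈ β, fmin V = fmin W ∧ fmax V = fmax W

/-- `V` is an outer block of `α`: no block of `α` strictly nests around it. -/
def OuterBlock (α : Finset (Finset ℕ)) (V : Finset ℕ) : Prop :=
  ∀ V' ∈ α, ¬ (fmin V' < fmin V ∧ fmax V < fmax V')

/-- `π` is a linked partition of the finite set `F ⊆ ℕ`. -/
def IsLinkedPartitionOfSet (F : Finset ℕ) (π : Finset (Finset ℕ)) : Prop :=
  (∀ A ∈ π, A.Nonempty) ∧ (∀ A ∈ π, A ⊆ F) ∧ (∀ m ∈ F, ∃ A ∈ π, m ∈ A) ∧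
    ∀ A ∈ π, ∀ B ∈ π, A ≠ B →
      A ∩ B = ∅ ∨
        (2 ≤ A.card ∧ 2 ≤ B.card ∧ (A ∩ B).card = 1 ∧ fmin A ≠ fmin B ∧
          ∀ x ∈ A ∩ B, x = fmin A ∨ x = fmin B)

/-- `π ∈ NCL(F)`: a non-crossing linked partition of the finite set `F`. -/
def IsNCLOfSet (F : Finset ℕ) (π : Finset (Finset ℕ)) : Prop :=
  IsLinkedPartitionOfSet F π ∧ ¬ IsCrossing π

/-- `π ∈ NCL(n)`: a non-crossing linked partition of `{1,…,n}`. -/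
def IsNCL (n : ℕ) (π : Finset (Finset ℕ)) : Prop :=
  IsNCLOfSet (Finset.Icc 1 n) π

/-- The number of blocks of `π` containing `m`. -/
noncomputable def coverCount (π : Finset (Finset ℕ)) (m : ℕ) : ℕ :=
  (π.filter fun A => m ∈ A).card

/-- `m` is singly-covered by `π`: it lies in exactly one block. -/
def SinglyCovered (π : Finset (Finset ℕ)) (m : ℕ) : Prop := coverCount π m = 1

/-- `m` is doubly-covered by `π`: it lies in exactly two blocks. -/
def DoublyCovered (π : Finset (Finset ℕ)) (m : ℕ) : Prop := coverCount π m = 2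

/-- The partition `π̂` generated by the blocks of `π`: its blocks are the connected
components of the ground set under the relation of lying in a common block of `π`. -/
noncomputable def genPart (π : Finset (Finset ℕ)) : Finset (Finset ℕ) :=
  (π.sup id).image fun m =>
    (π.sup id).filter fun x =>
      Relation.EqvGen (fun a b => ∃ A ∈ π, a ∈ A ∧ b ∈ A) m x

/-- The unlinking `π̌` of a linked partition `π`. -/
noncomputable def unlink (π : Finset (Finset ℕ)) : Finset (Finset ℕ) :=
  π.image fun A => if SinglyCovered π (fmin A) then A else A.erase (fmin A)

/-- The block of `α` containing `m` (empty if there is none). -/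
noncomputable def blockOf (α : Finset (Finset ℕ)) (m : ℕ) : Finset ℕ :=
  (α.filter fun V => m ∈ V).sup id

/-- The successor of `m` in the cycle on the block `V` (elements in increasing order). -/
noncomputable def nextInBlock (V : Finset ℕ) (m : ℕ) : ℕ :=
  if m = fmax V then fmin V else fmin (V.filter fun x => m < x)

/-- The predecessor of `m` in the cycle on the block `V`. -/
noncomputable def prevInBlock (V : Finset ℕ) (m : ℕ) : ℕ :=
  if m = fmin V then fmax V else fmax (V.filter fun x => x < m)

/-- The permutation `P_α` associated to a partition `α`, as a function: each block
`{i₁ < i₂ < ⋯ < iₘ}` becomes the cycle `i₁ ↦ i₂ ↦ ⋯ ↦ iₘ ↦ i₁`. -/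
noncomputable def permOf (α : Finset (Finset ℕ)) (m : ℕ) : ℕ :=
  if m ∈ blockOf α m then nextInBlock (blockOf α m) m else m

/-- The inverse permutation `P_α⁻¹`, as a function. -/
noncomputable def permOfInv (α : Finset (Finset ℕ)) (m : ℕ) : ℕ :=
  if m ∈ blockOf α m then prevInBlock (blockOf α m) m else m

/-- The action `τ·α` of a map `τ` on a partition `α = {V₁,…,V_p}`, giving
`{τ(V₁),…,τ(V_p)}`. -/
def mapPart (τ : ℕ → ℕ) (α : Finset (Finset ℕ)) : Finset (Finset ℕ) :=
  α.image fun V => V.image τ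

/-- The cycled unlinking `π° := P_{π̂}⁻¹ · π̌`. -/
noncomputable def cycUnlink (π : Finset (Finset ℕ)) : Finset (Finset ℕ) :=
  mapPart (permOfInv (genPart π)) (unlink π)

/-- `NC(n)` as a finset. -/
noncomputable def NCF (n : ℕ) : Finset (Finset (Finset ℕ)) :=
  ((Finset.Icc 1 n).powerset.powerset).filter (IsNCPartition n)

/-- `NCL(n)` as a finset. -/
noncomputable def NCLF (n : ℕ) : Finset (Finset (Finset ℕ)) :=
  ((Finset.Icc 1 n).powerset.powerset).filter (IsNCL n)

/-- The restriction `π|_E`: the blocks of `π` contained in `E`. -/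
def restrictL (π : Finset (Finset ℕ)) (E : Finset ℕ) : Finset (Finset ℕ) :=
  π.filter fun A => A ⊆ E

/-- The partition `β₀` obtained from `β` by leaving blocks of size `≤ 2` intact and
breaking each block `W` with `|W| ≥ 3` into the doubleton `{min W, max W}` together
with `|W| - 2` singletons. -/
noncomputable def breakBlocks (β : Finset (Finset ℕ)) : Finset (Finset ℕ) :=
  β.biUnion fun W =>
    if W.card ≤ 2 then {W}
    else insert {fmin W, fmax W} ((W \ {fmin W, fmax W}).image fun x => ({x} : Finset ℕ))

/-!
Both identities come from counting the pairs `α ≪ β` in two ways.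

For fixed `β`, a partition `α ≪ β` is the same as a choice, for each block `W` of `β`, of a
non-crossing partition of `W` in which `min W` and `max W` share a block (an irreducible one).
Deleting `max W` identifies these with `NC(W \ {max W})`, so there are `Cat_{|W|-1}` of them;
here `|NC(F)| = Cat_{|F|}` follows from the Catalan recursion, splitting a partition at the
largest element `j` of the block of `min F` into an irreducible partition of `F ∩ [min F, j]`
and an arbitrary one of `F ∩ (j, ∞)`.

For fixed `α`, a partition `β` with `α ≪ β` is determined by the set of blocks of `α` that do
not contain the minimum of their `β`-block. Such a block is enclosed by the block holding that
minimum, so it is inner, and every set `S` of inner blocks arises: merge each block of `α` into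
the innermost block outside `S` among itself and the blocks enclosing it. Hence there are
`2^{i(α)}` such `β`.
-/

open Finset

theorem fmin_mem {A : Finset ℕ} (h : A.Nonempty) : fmin A ∈ A := by
  exact_mod_cast Nat.sInf_mem (s := (A : Set ℕ)) (by exact_mod_cast h)

theorem fmin_le {A : Finset ℕ} {a : ℕ} (h : a ∈ A) : fmin A ≤ a :=
  Nat.sInf_le (by exact_mod_cast h)

theorem fmax_mem {A : Finset ℕ} (h : A.Nonempty) : fmax A ∈ A := by
  exact_mod_cast Nat.sSup_mem (s := (A : Set ℕ)) (by exact_mod_cast h) A.finite_toSet.bddAbove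

theorem le_fmax {A : Finset ℕ} {a : ℕ} (h : a ∈ A) : a ≤ fmax A :=
  le_csSup A.finite_toSet.bddAbove (by exact_mod_cast h)

theorem fmin_eq_of_mem {A : Finset ℕ} {a : ℕ} (ha : a ∈ A) (h : ∀ x ∈ A, a ≤ x) : fmin A = a :=
  le_antisymm (fmin_le ha) (h _ (fmin_mem ⟨a, ha⟩))

theorem fmax_eq_of_mem {A : Finset ℕ} {a : ℕ} (ha : a ∈ A) (h : ∀ x ∈ A, x ≤ a) : fmax A = a :=
  le_antisymm (h _ (fmax_mem ⟨a, ha⟩)) (le_fmax ha)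

theorem fmin_singleton (x : ℕ) : fmin {x} = x :=
  fmin_eq_of_mem (mem_singleton_self x) fun _ hy => (mem_singleton.1 hy).ge

theorem fmax_singleton (x : ℕ) : fmax {x} = x :=
  fmax_eq_of_mem (mem_singleton_self x) fun _ hy => (mem_singleton.1 hy).le

-- `IsCrossing π` unfolds to `∃ A ∈ π, ∃ B ∈ π, A ≠ B ∧ BlocksCross A B`.
def BlocksCross (A B : Finset ℕ) : Prop :=
  ∃ a ∈ A, ∃ b ∈ B, ∃ c ∈ A, ∃ d ∈ B, a < b ∧ b < c ∧ c < d

theorem BlocksCross.mono {A B A' B' : Finset ℕ} (h : BlocksCross A B) (hA : A ⊆ A')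
    (hB : B ⊆ B') : BlocksCross A' B' := by
  obtain ⟨a, ha, b, hb, c, hc, d, hd, hab, hbc, hcd⟩ := h
  exact ⟨a, hA ha, b, hB hb, c, hA hc, d, hB hd, hab, hbc, hcd⟩

theorem not_blocksCross_of_lt {A B : Finset ℕ} (h : ∀ x ∈ A, ∀ y ∈ B, x < y) :
    ¬BlocksCross A B ∧ ¬BlocksCross B A := by
  constructor
  · rintro ⟨a, -, b, hb, c, hc, -, -, -, hbc, -⟩
    exact absurd (h c hc b hb) (not_lt.2 hbc.le)
  · rintro ⟨a, ha, b, hb, -, -, -, -, hab, -, -⟩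
    exact absurd (h b hb a ha) (not_lt.2 hab.le)

theorem not_isCrossing_image {π : Finset (Finset ℕ)} (hπ : ¬IsCrossing π)
    (f : Finset ℕ → Finset ℕ) (hf : ∀ A ∈ π, f A ⊆ A) : ¬IsCrossing (π.image f) := by
  rintro ⟨_, hA', _, hB', hne, hcross⟩
  obtain ⟨A, hA, rfl⟩ := mem_image.1 hA'
  obtain ⟨B, hB, rfl⟩ := mem_image.1 hB'
  exact hπ ⟨A, hA, B, hB, fun h => hne (h ▸ rfl),
    BlocksCross.mono hcross (hf A hA) (hf B hB)⟩

theorem not_isCrossing_of_subset {π π' : Finset (Finset ℕ)} (hπ' : ¬IsCrossing π')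
    (h : π ⊆ π') : ¬IsCrossing π :=
  fun ⟨A, hA, B, hB, hne, hcross⟩ => hπ' ⟨A, h hA, B, h hB, hne, hcross⟩

theorem not_isCrossing_union {γ ε : Finset (Finset ℕ)} (hγ : ¬IsCrossing γ)
    (hε : ¬IsCrossing ε)
    (h : ∀ A ∈ γ, ∀ B ∈ ε, A ≠ B → ¬BlocksCross A B ∧ ¬BlocksCross B A) :
    ¬IsCrossing (γ ∪ ε) := by
  rintro ⟨A, hA, B, hB, hne, hcross⟩
  rcases mem_union.1 hA with hA | hA <;> rcases mem_union.1 hB with hB | hB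
  · exact hγ ⟨A, hA, B, hB, hne, hcross⟩
  · exact (h A hA B hB hne).1 hcross
  · exact (h B hB A hA hne.symm).2 hcross
  · exact hε ⟨A, hA, B, hB, hne, hcross⟩

namespace IsPartitionOfSet

variable {F : Finset ℕ} {α : Finset (Finset ℕ)}

theorem nonempty (h : IsPartitionOfSet F α) {V : Finset ℕ} (hV : V ∈ α) : V.Nonempty :=
  h.1 V hV

theorem subset (h : IsPartitionOfSet F α) {V : Finset ℕ} (hV : V ∈ α) : V ⊆ F :=
  h.2.1 V hV

theorem exists_mem (h : IsPartitionOfSet F α) {m : ℕ} (hm : m ∈ F) : ∃ V ∈ α, m ∈ V :=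
  h.2.2.1 m hm

theorem eq_of_mem (h : IsPartitionOfSet F α) {V W : Finset ℕ} {x : ℕ} (hV : V ∈ α)
    (hW : W ∈ α) (hxV : x ∈ V) (hxW : x ∈ W) : V = W := by
  by_contra hne
  have := h.2.2.2 V hV W hW hne ▸ mem_inter.2 ⟨hxV, hxW⟩
  exact notMem_empty x this

theorem blockOf_eq (h : IsPartitionOfSet F α) {V : Finset ℕ} {m : ℕ} (hV : V ∈ α)
    (hm : m ∈ V) : blockOf α m = V := by
  have : α.filter (fun V => m ∈ V) = {V} := by
    ext W
    simp only [mem_filter, mem_singleton]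
    exact ⟨fun ⟨hW, hmW⟩ => h.eq_of_mem hW hV hmW hm, by rintro rfl; exact ⟨hV, hm⟩⟩
  rw [blockOf, this, sup_singleton, id]

theorem blockOf_mem (h : IsPartitionOfSet F α) {m : ℕ} (hm : m ∈ F) :
    blockOf α m ∈ α ∧ m ∈ blockOf α m := by
  obtain ⟨V, hV, hmV⟩ := h.exists_mem hm
  rw [h.blockOf_eq hV hmV]
  exact ⟨hV, hmV⟩

theorem eq_of_subset (h : IsPartitionOfSet F α) {V W W' : Finset ℕ} (hV : V.Nonempty)
    (hW : W ∈ α) (hW' : W' ∈ α) (hVW : V ⊆ W) (hVW' : V ⊆ W') : W = W' :=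
  h.eq_of_mem hW hW' (hVW hV.choose_spec) (hVW' hV.choose_spec)

theorem eq_of_fmin_eq (h : IsPartitionOfSet F α) {V W : Finset ℕ} (hV : V ∈ α) (hW : W ∈ α)
    (hVW : fmin V = fmin W) : V = W :=
  h.eq_of_mem hV hW (fmin_mem (h.nonempty hV)) (hVW ▸ fmin_mem (h.nonempty hW))

theorem restrict (h : IsPartitionOfSet F α) {E : Finset ℕ} (hEF : E ⊆ F)
    (hE : ∀ V ∈ α, ∀ x ∈ V, x ∈ E → V ⊆ E) : IsPartitionOfSet E (restrictL α E) := by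
  refine ⟨fun V hV => h.nonempty (mem_filter.1 hV).1, fun V hV => (mem_filter.1 hV).2,
    fun m hm => ?_, fun V hV W hW => h.2.2.2 V (mem_filter.1 hV).1 W (mem_filter.1 hW).1⟩
  obtain ⟨V, hV, hmV⟩ := h.exists_mem (hEF hm)
  exact ⟨V, mem_filter.2 ⟨hV, hE V hV m hmV hm⟩, hmV⟩

theorem restrict_of_subset_or_subset (h : IsPartitionOfSet F α) {G H : Finset ℕ}
    (hGF : G ⊆ F) (hGH : Disjoint G H) (hsplit : ∀ V ∈ α, V ⊆ G ∨ V ⊆ H) :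
    IsPartitionOfSet G (restrictL α G) :=
  h.restrict hGF fun V hV _ hxV hxG =>
    (hsplit V hV).resolve_right fun hVH => disjoint_left.1 hGH hxG (hVH hxV)

theorem restrict_of_refines (h : IsPartitionOfSet F α) {β : Finset (Finset ℕ)}
    (hβ : IsPartitionOfSet F β) (hαβ : Refines α β) {W : Finset ℕ} (hW : W ∈ β) :
    IsPartitionOfSet W (restrictL α W) :=
  h.restrict (hβ.subset hW) fun V hV x hxV hxW => by
    obtain ⟨W', hW', hVW'⟩ := hαβ V hV
    exact hβ.eq_of_mem hW' hW (hVW' hxV) hxW ▸ hVW'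

theorem union {G H : Finset ℕ} {γ ε : Finset (Finset ℕ)} (hγ : IsPartitionOfSet G γ)
    (hε : IsPartitionOfSet H ε) (hGH : Disjoint G H) : IsPartitionOfSet (G ∪ H) (γ ∪ ε) := by
  refine ⟨fun V hV => ?_, fun V hV => ?_, fun m hm => ?_, fun V hV W hW hVW => ?_⟩
  · rcases mem_union.1 hV with hV | hV
    exacts [hγ.nonempty hV, hε.nonempty hV]
  · rcases mem_union.1 hV with hV | hV
    exacts [(hγ.subset hV).trans subset_union_left, (hε.subset hV).trans subset_union_right]
  · rcases mem_union.1 hm with hm | hm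
    · obtain ⟨V, hV, hmV⟩ := hγ.exists_mem hm
      exact ⟨V, mem_union_left _ hV, hmV⟩
    · obtain ⟨V, hV, hmV⟩ := hε.exists_mem hm
      exact ⟨V, mem_union_right _ hV, hmV⟩
  · have hdisj : ∀ V ∈ γ, ∀ W ∈ ε, V ∩ W = ∅ := fun V hV W hW =>
      disjoint_iff_inter_eq_empty.1 (hGH.mono (hγ.subset hV) (hε.subset hW))
    rcases mem_union.1 hV with hV | hV <;> rcases mem_union.1 hW with hW | hW
    · exact hγ.2.2.2 V hV W hW hVW
    · exact hdisj V hV W hW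
    · exact inter_comm V W ▸ hdisj W hW V hV
    · exact hε.2.2.2 V hV W hW hVW

theorem image_erase (h : IsPartitionOfSet F α) {M : ℕ}
    (hM : ∀ B ∈ α, M ∈ B → (B.erase M).Nonempty) :
    IsPartitionOfSet (F.erase M) (α.image (·.erase M)) := by
  simp only [IsPartitionOfSet, forall_mem_image]
  refine ⟨fun B hB => ?_, fun B hB => erase_subset_erase M (h.subset hB), fun m hm => ?_,
    fun B hB B' hB' hne => ?_⟩
  · by_cases hMB : M ∈ B
    · exact hM B hB hMB
    · rw [erase_eq_of_notMem hMB]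
      exact h.nonempty hB
  · obtain ⟨B, hB, hmB⟩ := h.exists_mem (mem_of_mem_erase hm)
    exact ⟨B.erase M, mem_image_of_mem _ hB, mem_erase.2 ⟨ne_of_mem_erase hm, hmB⟩⟩
  · have hBB' : B ≠ B' := fun h => hne (h ▸ rfl)
    exact subset_empty.1 (h.2.2.2 B hB B' hB' hBB' ▸
      inter_subset_inter (erase_subset M B) (erase_subset M B'))

theorem restrictL_union_left {G H : Finset ℕ} {γ ε : Finset (Finset ℕ)}
    (hγ : IsPartitionOfSet G γ) (hε : IsPartitionOfSet H ε) (hGH : Disjoint G H) :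
    restrictL (γ ∪ ε) G = γ := by
  ext V
  simp only [restrictL, mem_filter, mem_union]
  constructor
  · rintro ⟨hV | hV, hVG⟩
    · exact hV
    · obtain ⟨x, hx⟩ := hε.nonempty hV
      exact absurd (hε.subset hV hx) (disjoint_left.1 hGH (hVG hx))
  · exact fun hV => ⟨Or.inl hV, hγ.subset hV⟩

theorem restrictL_union_right {G H : Finset ℕ} {γ ε : Finset (Finset ℕ)}
    (hγ : IsPartitionOfSet G γ) (hε : IsPartitionOfSet H ε) (hGH : Disjoint G H) :
    restrictL (γ ∪ ε) H = ε := by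
  rw [union_comm]
  exact restrictL_union_left hε hγ hGH.symm

end IsPartitionOfSet

/-! ### Counting non-crossing partitions -/

noncomputable def ncPartitions (F : Finset ℕ) : Finset (Finset (Finset ℕ)) :=
  F.powerset.powerset.filter fun α => IsPartitionOfSet F α ∧ ¬IsCrossing α

theorem mem_ncPartitions {F : Finset ℕ} {α : Finset (Finset ℕ)} :
    α ∈ ncPartitions F ↔ IsPartitionOfSet F α ∧ ¬IsCrossing α := by
  rw [ncPartitions, mem_filter, and_iff_right_iff_imp]
  exact fun h => mem_powerset.2 fun V hV => mem_powerset.2 (h.1.subset hV)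

theorem NCF_eq_ncPartitions (n : ℕ) : NCF n = ncPartitions (Icc 1 n) := by
  ext α
  rw [mem_ncPartitions, NCF, mem_filter, IsNCPartition, IsPartitionOf, and_iff_right_iff_imp]
  exact fun h => mem_powerset.2 fun V hV => mem_powerset.2 (h.1.subset hV)

noncomputable def ncIrreducible (W : Finset ℕ) : Finset (Finset (Finset ℕ)) :=
  (ncPartitions W).filter fun γ => ∃ B ∈ γ, fmin W ∈ B ∧ fmax W ∈ B

theorem ncPartitions_empty : ncPartitions ∅ = {∅} := by
  ext α
  rw [mem_ncPartitions, mem_singleton]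
  constructor
  · rintro ⟨h, -⟩
    refine eq_empty_of_forall_notMem fun V hV => ?_
    obtain ⟨x, hx⟩ := h.nonempty hV
    exact notMem_empty x (h.subset hV hx)
  · rintro rfl
    exact ⟨⟨by simp, by simp, by simp, by simp⟩, fun ⟨A, hA, _⟩ => notMem_empty A hA⟩

theorem ncPartitions_singleton (x : ℕ) : ncPartitions {x} = {{{x}}} := by
  ext α
  rw [mem_ncPartitions, mem_singleton]
  constructor
  · rintro ⟨h, -⟩
    have hblock : ∀ V ∈ α, V = {x} := fun V hV =>
      (subset_singleton_iff.1 (h.subset hV)).resolve_left (h.nonempty hV).ne_empty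
    obtain ⟨V, hV, -⟩ := h.exists_mem (mem_singleton_self x)
    exact eq_singleton_iff_unique_mem.2 ⟨hblock V hV ▸ hV, hblock⟩
  · rintro rfl
    refine ⟨⟨by simp, by simp, by simp, by simp⟩, ?_⟩
    rintro ⟨A, hA, B, hB, hne, -⟩
    exact hne ((mem_singleton.1 hA).trans (mem_singleton.1 hB).symm)

noncomputable def insertIntoBlockOf (μ M : ℕ) (δ : Finset (Finset ℕ)) : Finset (Finset ℕ) :=
  δ.image fun V => if μ ∈ V then insert M V else V

theorem mem_ite_insert {μ M x : ℕ} {V : Finset ℕ}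
    (hx : x ∈ if μ ∈ V then insert M V else V) : x ∈ V ∨ x = M ∧ μ ∈ V := by
  split_ifs at hx with hμV
  · exact (mem_insert.1 hx).symm.imp id fun h => ⟨h, hμV⟩
  · exact Or.inl hx

theorem IsPartitionOfSet.insertIntoBlockOf {E : Finset ℕ} {δ : Finset (Finset ℕ)}
    (h : IsPartitionOfSet E δ) {μ M : ℕ} (hμ : μ ∈ E) (hM : M ∉ E) :
    IsPartitionOfSet (insert M E) (insertIntoBlockOf μ M δ) := by
  have hMV : ∀ V ∈ δ, M ∉ V := fun V hV hMV => hM (h.subset hV hMV)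
  obtain ⟨Bμ, hBμ, hμBμ⟩ := h.exists_mem hμ
  simp only [IsPartitionOfSet, _root_.insertIntoBlockOf, forall_mem_image]
  refine ⟨?_, ?_, fun m hm => ?_, ?_⟩
  · intro V hV
    split_ifs
    exacts [insert_nonempty M V, h.nonempty hV]
  · intro V hV
    split_ifs
    exacts [insert_subset_insert M (h.subset hV), (h.subset hV).trans (subset_insert M E)]
  · rcases mem_insert.1 hm with rfl | hm
    · exact ⟨insert m Bμ, mem_image.2 ⟨Bμ, hBμ, if_pos hμBμ⟩, mem_insert_self m Bμ⟩
    · obtain ⟨V, hV, hmV⟩ := h.exists_mem hm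
      refine ⟨_, mem_image_of_mem _ hV, ?_⟩
      split_ifs
      exacts [mem_insert_of_mem hmV, hmV]
  · intro V hV U hU hne
    have hVU : V ≠ U := fun h => hne (h ▸ rfl)
    refine eq_empty_of_forall_notMem fun x hx => ?_
    obtain ⟨hx₁, hx₂⟩ := mem_inter.1 hx
    rcases mem_ite_insert hx₁ with hxV | ⟨hxM, hμV⟩
    · rcases mem_ite_insert hx₂ with hxU | ⟨hxM, -⟩
      · exact hVU (h.eq_of_mem hV hU hxV hxU)
      · exact hMV V hV (hxM ▸ hxV)
    · rcases mem_ite_insert hx₂ with hxU | ⟨-, hμU⟩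
      · exact hMV U hU (hxM ▸ hxU)
      · exact hVU (h.eq_of_mem hV hU hμV hμU)
theorem not_isCrossing_insertIntoBlockOf {E : Finset ℕ} {δ : Finset (Finset ℕ)}
    (h : IsPartitionOfSet E δ) (hδ : ¬IsCrossing δ) {μ M : ℕ} (hμ : ∀ x ∈ E, μ ≤ x)
    (hM : ∀ x ∈ E, x < M) : ¬IsCrossing (insertIntoBlockOf μ M δ) := by
  rintro ⟨_, hV', _, hU', hne, a, ha, b, hb, c, hc, d, hd, hab, hbc, hcd⟩
  obtain ⟨V, hV, rfl⟩ := mem_image.1 hV'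
  obtain ⟨U, hU, rfl⟩ := mem_image.1 hU'
  have hVU : V ≠ U := fun h => hne (h ▸ rfl)
  have hlt : ∀ W ∈ δ, ∀ x, x ∈ (if μ ∈ W then insert M W else W) → x < d → x ∈ W := by
    intro W _ x hx hxd
    rcases mem_ite_insert hx with hxW | ⟨hxM, -⟩
    · exact hxW
    rcases mem_ite_insert hd with hdU | ⟨hdM, -⟩
    · exact absurd (hM d (h.subset hU hdU)) (by omega)
    · omega
  have haV := hlt V hV a ha (by omega)
  have hbU := hlt U hU b hb (hbc.trans hcd)
  have hcV := hlt V hV c hc hcd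
  rcases mem_ite_insert hd with hdU | ⟨-, hμU⟩
  · exact hδ ⟨V, hV, U, hU, hVU, a, haV, b, hbU, c, hcV, d, hdU, hab, hbc, hcd⟩
  · have hμa : μ < a := (hμ a (h.subset hV haV)).lt_of_ne fun hμa =>
      hVU (h.eq_of_mem hV hU haV (hμa ▸ hμU))
    exact hδ ⟨U, hU, V, hV, hVU.symm, μ, hμU, a, haV, b, hbU, c, hcV, hμa, hab, hbc⟩

theorem image_erase_mem_ncPartitions {W : Finset ℕ} {γ : Finset (Finset ℕ)}
    (hγ : γ ∈ ncIrreducible W) (hW : fmin W < fmax W) :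
    γ.image (·.erase (fmax W)) ∈ ncPartitions (W.erase (fmax W)) := by
  obtain ⟨hγ, B₀, hB₀, hμB₀, hMB₀⟩ := mem_filter.1 hγ
  obtain ⟨hp, hnc⟩ := mem_ncPartitions.1 hγ
  refine mem_ncPartitions.2 ⟨hp.image_erase fun B hB hMB => ?_,
    not_isCrossing_image hnc _ fun B _ => erase_subset _ B⟩
  exact ⟨fmin W, mem_erase.2 ⟨hW.ne, hp.eq_of_mem hB hB₀ hMB hMB₀ ▸ hμB₀⟩⟩

theorem insertIntoBlockOf_mem_ncIrreducible {W : Finset ℕ} {δ : Finset (Finset ℕ)}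
    (hδ : δ ∈ ncPartitions (W.erase (fmax W))) (hW : W.Nonempty) (hlt : fmin W < fmax W) :
    insertIntoBlockOf (fmin W) (fmax W) δ ∈ ncIrreducible W := by
  obtain ⟨hp, hnc⟩ := mem_ncPartitions.1 hδ
  have hμ : fmin W ∈ W.erase (fmax W) := mem_erase.2 ⟨hlt.ne, fmin_mem hW⟩
  have hpart := hp.insertIntoBlockOf hμ (notMem_erase _ W)
  rw [insert_erase (fmax_mem hW)] at hpart
  obtain ⟨Bμ, hBμ, hμBμ⟩ := hp.exists_mem hμ
  refine mem_filter.2 ⟨mem_ncPartitions.2 ⟨hpart, not_isCrossing_insertIntoBlockOf hp hnc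
    (fun x hx => fmin_le (mem_of_mem_erase hx))
    fun x hx => (le_fmax (mem_of_mem_erase hx)).lt_of_ne (ne_of_mem_erase hx)⟩, ?_⟩
  exact ⟨insert (fmax W) Bμ, mem_image.2 ⟨Bμ, hBμ, if_pos hμBμ⟩, mem_insert_of_mem hμBμ,
    mem_insert_self _ Bμ⟩

theorem insertIntoBlockOf_image_erase {W : Finset ℕ} {γ : Finset (Finset ℕ)}
    (hγ : γ ∈ ncIrreducible W) (hW : fmin W < fmax W) :
    insertIntoBlockOf (fmin W) (fmax W) (γ.image (·.erase (fmax W))) = γ := by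
  obtain ⟨hγ, B₀, hB₀, hμB₀, hMB₀⟩ := mem_filter.1 hγ
  obtain ⟨hp, -⟩ := mem_ncPartitions.1 hγ
  rw [insertIntoBlockOf, image_image]
  refine (image_congr fun B hB => ?_).trans image_id
  by_cases hBB₀ : B = B₀
  · subst hBB₀
    rw [Function.comp_apply, if_pos (mem_erase.2 ⟨hW.ne, hμB₀⟩), insert_erase hMB₀, id]
  · have hMB : fmax W ∉ B := fun hMB => hBB₀ (hp.eq_of_mem hB hB₀ hMB hMB₀)
    have hμB : fmin W ∉ B := fun hμB => hBB₀ (hp.eq_of_mem hB hB₀ hμB hμB₀)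
    simp [erase_eq_of_notMem hMB, hμB]

theorem image_erase_insertIntoBlockOf {δ : Finset (Finset ℕ)} {μ M : ℕ} (hM : ∀ V ∈ δ, M ∉ V) :
    (insertIntoBlockOf μ M δ).image (·.erase M) = δ := by
  rw [insertIntoBlockOf, image_image]
  refine (image_congr fun V hV => ?_).trans image_id
  simp only [Function.comp_apply, id]
  split_ifs <;> simp [hM V hV]

theorem ncIrreducible_singleton (x : ℕ) : ncIrreducible {x} = {{{x}}} := by
  rw [ncIrreducible, ncPartitions_singleton, filter_singleton, if_pos]
  exact ⟨{x}, mem_singleton_self _, by simp [fmin_singleton], by simp [fmax_singleton]⟩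

theorem card_ncIrreducible {W : Finset ℕ} (hW : W.Nonempty) :
    #(ncIrreducible W) = #(ncPartitions (W.erase (fmax W))) := by
  rcases (fmin_le (fmax_mem hW)).eq_or_lt with heq | hlt
  · obtain ⟨x, rfl⟩ : ∃ x, W = {x} := ⟨fmax W, eq_singleton_iff_unique_mem.2
      ⟨fmax_mem hW, fun x hx => le_antisymm (le_fmax hx) (heq ▸ fmin_le hx)⟩⟩
    rw [ncIrreducible_singleton, fmax_singleton, erase_singleton, ncPartitions_empty,
      card_singleton, card_singleton]
  refine card_nbij' (·.image (·.erase (fmax W))) (insertIntoBlockOf (fmin W) (fmax W))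
    (fun γ hγ => image_erase_mem_ncPartitions hγ hlt)
    (fun δ hδ => insertIntoBlockOf_mem_ncIrreducible hδ hW hlt)
    (fun γ hγ => insertIntoBlockOf_image_erase hγ hlt) fun δ hδ => ?_
  exact image_erase_insertIntoBlockOf fun V hV hMV =>
    notMem_erase _ W ((mem_ncPartitions.1 hδ).1.subset hV hMV)

theorem restrictL_union_restrictL {α : Finset (Finset ℕ)} {G H : Finset ℕ}
    (hsplit : ∀ V ∈ α, V ⊆ G ∨ V ⊆ H) : restrictL α G ∪ restrictL α H = α := by
  ext V
  simp only [restrictL, mem_union, mem_filter]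
  exact ⟨by tauto, fun hV => (hsplit V hV).imp (⟨hV, ·⟩) (⟨hV, ·⟩)⟩

theorem subset_or_subset_of_blockOf_fmin {F : Finset ℕ} {α : Finset (Finset ℕ)}
    (hα : α ∈ ncPartitions F) (hF : F.Nonempty) {V : Finset ℕ} (hV : V ∈ α) :
    V ⊆ F.filter (· ≤ fmax (blockOf α (fmin F))) ∨
      V ⊆ F.filter (fmax (blockOf α (fmin F)) < ·) := by
  obtain ⟨hp, hnc⟩ := mem_ncPartitions.1 hα
  obtain ⟨hB, hfB⟩ := hp.blockOf_mem (fmin_mem hF)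
  set B := blockOf α (fmin F)
  have hjB : fmax B ∈ B := fmax_mem ⟨_, hfB⟩
  rw [or_iff_not_imp_right, not_subset]
  rintro ⟨y, hyV, hyR⟩
  have hyj : y ≤ fmax B := by simpa [hp.subset hV hyV] using hyR
  intro x hxV
  refine mem_filter.2 ⟨hp.subset hV hxV, not_lt.1 fun hjx => ?_⟩
  have hVB : V ≠ B := by
    rintro rfl
    exact absurd (le_fmax hxV) (not_le.2 hjx)
  have hfy : fmin F < y := (fmin_le (hp.subset hV hyV)).lt_of_ne fun h =>
    hVB (hp.eq_of_mem hV hB hyV (h ▸ hfB))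
  have hyj' : y < fmax B := hyj.lt_of_ne fun h => hVB (hp.eq_of_mem hV hB hyV (h ▸ hjB))
  exact hnc ⟨B, hB, V, hV, hVB.symm, _, hfB, y, hyV, _, hjB, x, hxV, hfy, hyj', hjx⟩

theorem fmin_filter_le {F : Finset ℕ} {j : ℕ} (hj : j ∈ F) :
    fmin (F.filter (· ≤ j)) = fmin F :=
  fmin_eq_of_mem (mem_filter.2 ⟨fmin_mem ⟨j, hj⟩, fmin_le hj⟩)
    fun _ hx => fmin_le (mem_filter.1 hx).1

theorem fmax_filter_le {F : Finset ℕ} {j : ℕ} (hj : j ∈ F) : fmax (F.filter (· ≤ j)) = j :=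
  fmax_eq_of_mem (mem_filter.2 ⟨hj, le_rfl⟩) fun _ hx => (mem_filter.1 hx).2

theorem erase_filter_le (F : Finset ℕ) (j : ℕ) :
    (F.filter (· ≤ j)).erase j = F.filter (· < j) := by
  ext x
  simp only [mem_erase, mem_filter]
  exact ⟨fun ⟨h₁, h₂, h₃⟩ => ⟨h₂, h₃.lt_of_ne h₁⟩, fun ⟨h₁, h₂⟩ => ⟨h₂.ne, h₁, h₂.le⟩⟩

theorem disjoint_filter_le_filter_lt (F : Finset ℕ) (j : ℕ) :
    Disjoint (F.filter (· ≤ j)) (F.filter (j < ·)) :=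
  disjoint_filter.2 fun _ _ h₁ h₂ => absurd h₁ (not_le.2 h₂)

theorem filter_le_union_filter_lt (F : Finset ℕ) (j : ℕ) :
    F.filter (· ≤ j) ∪ F.filter (j < ·) = F := by
  ext x
  simp only [mem_union, mem_filter]
  exact ⟨by tauto, fun hx => (le_or_gt x j).imp (⟨hx, ·⟩) (⟨hx, ·⟩)⟩

theorem restrictL_mem_of_fmax_blockOf_fmin {F : Finset ℕ} {α : Finset (Finset ℕ)}
    (hα : α ∈ ncPartitions F) (hF : F.Nonempty) :
    restrictL α (F.filter (· ≤ fmax (blockOf α (fmin F)))) ∈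
        ncIrreducible (F.filter (· ≤ fmax (blockOf α (fmin F)))) ∧
      restrictL α (F.filter (fmax (blockOf α (fmin F)) < ·)) ∈
        ncPartitions (F.filter (fmax (blockOf α (fmin F)) < ·)) := by
  obtain ⟨hp, hnc⟩ := mem_ncPartitions.1 hα
  obtain ⟨hB, hfB⟩ := hp.blockOf_mem (fmin_mem hF)
  have hj : fmax (blockOf α (fmin F)) ∈ F := hp.subset hB (fmax_mem ⟨_, hfB⟩)
  have hsplit := fun V (hV : V ∈ α) => subset_or_subset_of_blockOf_fmin hα hF hV
  have hLR := disjoint_filter_le_filter_lt F (fmax (blockOf α (fmin F)))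
  have hBL := (hsplit _ hB).resolve_right fun hBR =>
    absurd (mem_filter.1 (hBR hfB)).2 (not_lt.2 (le_fmax hfB))
  refine ⟨mem_filter.2 ⟨mem_ncPartitions.2 ⟨?_, ?_⟩, ?_⟩, mem_ncPartitions.2 ⟨?_, ?_⟩⟩
  · exact hp.restrict_of_subset_or_subset (filter_subset _ F) hLR hsplit
  · exact not_isCrossing_of_subset hnc (filter_subset _ α)
  · rw [fmin_filter_le hj, fmax_filter_le hj]
    exact ⟨_, mem_filter.2 ⟨hB, hBL⟩, hfB, fmax_mem ⟨_, hfB⟩⟩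
  · exact hp.restrict_of_subset_or_subset (filter_subset _ F) hLR.symm
      fun V hV => (hsplit V hV).symm
  · exact not_isCrossing_of_subset hnc (filter_subset _ α)

theorem union_mem_of_mem_ncIrreducible {F : Finset ℕ} {j : ℕ} (hj : j ∈ F)
    {γ ε : Finset (Finset ℕ)} (hγ : γ ∈ ncIrreducible (F.filter (· ≤ j)))
    (hε : ε ∈ ncPartitions (F.filter (j < ·))) :
    γ ∪ ε ∈ ncPartitions F ∧ fmax (blockOf (γ ∪ ε) (fmin F)) = j := by
  obtain ⟨hγ, B, hB, hfB, hjB⟩ := mem_filter.1 hγ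
  obtain ⟨hγp, hγnc⟩ := mem_ncPartitions.1 hγ
  obtain ⟨hεp, hεnc⟩ := mem_ncPartitions.1 hε
  have hpart := hγp.union hεp (disjoint_filter_le_filter_lt F j)
  rw [filter_le_union_filter_lt] at hpart
  have hlt : ∀ A ∈ γ, ∀ C ∈ ε, ∀ x ∈ A, ∀ y ∈ C, x < y := fun A hA C hC x hx y hy =>
    ((mem_filter.1 (hγp.subset hA hx)).2).trans_lt (mem_filter.1 (hεp.subset hC hy)).2
  refine ⟨mem_ncPartitions.2 ⟨hpart, not_isCrossing_union hγnc hεnc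
    fun A hA C hC _ => not_blocksCross_of_lt (hlt A hA C hC)⟩, ?_⟩
  rw [fmin_filter_le hj] at hfB
  rw [fmax_filter_le hj] at hjB
  rw [hpart.blockOf_eq (mem_union_left _ hB) hfB]
  exact fmax_eq_of_mem hjB fun x hx => (mem_filter.1 (hγp.subset hB hx)).2

theorem card_filter_fmax_blockOf_fmin {F : Finset ℕ} {j : ℕ} (hj : j ∈ F) :
    #((ncPartitions F).filter fun α => fmax (blockOf α (fmin F)) = j) =
      #(ncIrreducible (F.filter (· ≤ j))) * #(ncPartitions (F.filter (j < ·))) := by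
  have hF : F.Nonempty := ⟨j, hj⟩
  have hLR := disjoint_filter_le_filter_lt F j
  rw [← card_product]
  refine card_nbij' (fun α => (restrictL α (F.filter (· ≤ j)), restrictL α (F.filter (j < ·))))
    (fun p => p.1 ∪ p.2) (fun α hα => ?_) (fun p hp => ?_) (fun α hα => ?_) (fun p hp => ?_)
  · obtain ⟨hαF, rfl⟩ := mem_filter.1 (mem_coe.1 hα)
    exact mem_product.2 (restrictL_mem_of_fmax_blockOf_fmin hαF hF)
  · obtain ⟨hγ, hε⟩ := mem_product.1 (mem_coe.1 hp)
    exact mem_filter.2 (union_mem_of_mem_ncIrreducible hj hγ hε)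
  · obtain ⟨hαF, rfl⟩ := mem_filter.1 (mem_coe.1 hα)
    exact restrictL_union_restrictL fun V hV => subset_or_subset_of_blockOf_fmin hαF hF hV
  · obtain ⟨hγ, hε⟩ := mem_product.1 (mem_coe.1 hp)
    have hγp := (mem_ncPartitions.1 (mem_filter.1 hγ).1).1
    have hεp := (mem_ncPartitions.1 hε).1
    exact Prod.ext (hγp.restrictL_union_left hεp hLR) (hγp.restrictL_union_right hεp hLR)

theorem sum_card_filter_lt (F : Finset ℕ) (g : ℕ → ℕ) :
    ∑ j ∈ F, g #(F.filter (· < j)) = ∑ i ∈ range #F, g i := by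
  induction F using Finset.induction_on_max with
  | empty => simp
  | insert a s hlt ih =>
    have ha : a ∉ s := fun h => lt_irrefl a (hlt a h)
    rw [sum_insert ha, card_insert_of_notMem ha, sum_range_succ, ← ih, add_comm]
    congr 1
    · refine sum_congr rfl fun j hj => ?_
      rw [filter_insert, if_neg (not_lt.2 (hlt j hj).le)]
    · rw [filter_insert, if_neg (lt_irrefl a), filter_true_of_mem hlt]

theorem card_filter_lt_add_card_filter_gt {F : Finset ℕ} {j : ℕ} (hj : j ∈ F) :
    #(F.filter (· < j)) + #(F.filter (j < ·)) + 1 = #F := by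
  rw [← card_filter_add_card_filter_not (s := F) (· ≤ j), ← erase_filter_le,
    card_erase_of_mem (s := F.filter (· ≤ j)) (mem_filter.2 ⟨hj, le_rfl⟩)]
  simp only [not_le]
  have := (card_pos (s := F.filter (· ≤ j))).2 ⟨j, mem_filter.2 ⟨hj, le_rfl⟩⟩
  omega

theorem card_ncPartitions (F : Finset ℕ) : #(ncPartitions F) = catalan #F := by
  induction hn : #F using Nat.strong_induction_on generalizing F with
  | _ n ih =>
    rcases F.eq_empty_or_nonempty with rfl | hF
    · simp [← hn, ncPartitions_empty]
    obtain ⟨k, rfl⟩ : ∃ k, n = k + 1 := ⟨n - 1, by have := hF.card_pos; omega⟩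
    have hmaps : ((ncPartitions F : Set _)).MapsTo (fun α => fmax (blockOf α (fmin F))) F := by
      intro α hα
      obtain ⟨hp, -⟩ := mem_ncPartitions.1 hα
      obtain ⟨hB, hfB⟩ := hp.blockOf_mem (fmin_mem hF)
      exact hp.subset hB (fmax_mem ⟨_, hfB⟩)
    have hfiber : ∀ j ∈ F, #((ncPartitions F).filter fun α => fmax (blockOf α (fmin F)) = j) =
        catalan #(F.filter (· < j)) * catalan (k - #(F.filter (· < j))) := by
      intro j hj
      have hcard := card_filter_lt_add_card_filter_gt hj
      rw [card_filter_fmax_blockOf_fmin hj,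
        card_ncIrreducible (W := F.filter (· ≤ j)) ⟨j, mem_filter.2 ⟨hj, le_rfl⟩⟩,
        fmax_filter_le hj, erase_filter_le, ih _ (by omega) _ rfl, ih _ (by omega) _ rfl]
      congr 2
      omega
    rw [card_eq_sum_card_fiberwise hmaps, sum_congr rfl hfiber,
      sum_card_filter_lt F fun i => catalan i * catalan (k - i), hn, catalan_succ,
      Fin.sum_univ_eq_sum_range fun i => catalan i * catalan (k - i)]

/-! ### The partitions `α ≪ β` of a fixed `β` -/

noncomputable def blockwiseUnion (β : Finset (Finset ℕ))
    (p : ∀ W ∈ β, Finset (Finset ℕ)) : Finset (Finset ℕ) :=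
  β.attach.biUnion fun W => p W.1 W.2

theorem mem_blockwiseUnion {β : Finset (Finset ℕ)} {p : ∀ W ∈ β, Finset (Finset ℕ)}
    {V : Finset ℕ} : V ∈ blockwiseUnion β p ↔ ∃ W, ∃ hW : W ∈ β, V ∈ p W hW := by
  simp [blockwiseUnion]

section blockwiseUnion

variable {F : Finset ℕ} {β : Finset (Finset ℕ)} {p : ∀ W ∈ β, Finset (Finset ℕ)}

theorem IsPartitionOfSet.blockwiseUnion (hβ : IsPartitionOfSet F β)
    (hp : ∀ W (hW : W ∈ β), IsPartitionOfSet W (p W hW)) :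
    IsPartitionOfSet F (blockwiseUnion β p) := by
  simp only [IsPartitionOfSet, mem_blockwiseUnion, forall_exists_index]
  refine ⟨fun V W hW hV => (hp W hW).nonempty hV,
    fun V W hW hV => ((hp W hW).subset hV).trans (hβ.subset hW), fun m hm => ?_,
    fun V W hW hV V' W' hW' hV' hne => ?_⟩
  · obtain ⟨W, hW, hmW⟩ := hβ.exists_mem hm
    obtain ⟨V, hV, hmV⟩ := (hp W hW).exists_mem hmW
    exact ⟨V, ⟨W, hW, hV⟩, hmV⟩
  · by_cases hWW' : W = W'
    · subst hWW'
      exact (hp W hW).2.2.2 V hV V' hV' hne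
    · exact subset_empty.1 (hβ.2.2.2 W hW W' hW' hWW' ▸
        inter_subset_inter ((hp W hW).subset hV) ((hp W' hW').subset hV'))

theorem not_isCrossing_blockwiseUnion (hβ : ¬IsCrossing β)
    (hp : ∀ W (hW : W ∈ β), IsPartitionOfSet W (p W hW) ∧ ¬IsCrossing (p W hW)) :
    ¬IsCrossing (blockwiseUnion β p) := by
  rintro ⟨V, hV, V', hV', hne, hcross⟩
  obtain ⟨W, hW, hV⟩ := mem_blockwiseUnion.1 hV
  obtain ⟨W', hW', hV'⟩ := mem_blockwiseUnion.1 hV'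
  by_cases hWW' : W = W'
  · subst hWW'
    exact (hp W hW).2 ⟨V, hV, V', hV', hne, hcross⟩
  · exact hβ ⟨W, hW, W', hW', hWW',
      BlocksCross.mono hcross ((hp W hW).1.subset hV) ((hp W' hW').1.subset hV')⟩

theorem restrictL_blockwiseUnion (hβ : IsPartitionOfSet F β)
    (hp : ∀ W (hW : W ∈ β), IsPartitionOfSet W (p W hW)) {W : Finset ℕ} (hW : W ∈ β) :
    restrictL (blockwiseUnion β p) W = p W hW := by
  ext V
  simp only [restrictL, mem_filter, mem_blockwiseUnion]
  constructor
  · rintro ⟨⟨W', hW', hV⟩, hVW⟩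
    obtain rfl := hβ.eq_of_subset ((hp W' hW').nonempty hV) hW' hW ((hp W' hW').subset hV) hVW
    exact hV
  · exact fun hV => ⟨⟨W, hW, hV⟩, (hp W hW).subset hV⟩

theorem blockwiseUnion_restrictL {α : Finset (Finset ℕ)} (hαβ : Refines α β) :
    blockwiseUnion β (fun W _ => restrictL α W) = α := by
  ext V
  simp only [mem_blockwiseUnion, restrictL, mem_filter]
  exact ⟨fun ⟨_, _, hV, _⟩ => hV, fun hV => (hαβ V hV).imp fun W ⟨hW, hVW⟩ => ⟨hW, hV, hVW⟩⟩

end blockwiseUnion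

theorem card_ncIrreducible_eq_catalan {W : Finset ℕ} (hW : W.Nonempty) :
    #(ncIrreducible W) = catalan (#W - 1) := by
  rw [card_ncIrreducible hW, card_ncPartitions, card_erase_of_mem (fmax_mem hW)]

theorem card_filter_LL_right {F : Finset ℕ} {β : Finset (Finset ℕ)} (hβ : β ∈ ncPartitions F) :
    #((ncPartitions F).filter fun α => LL α β) = ∏ W ∈ β, catalan (#W - 1) := by
  obtain ⟨hβp, hβnc⟩ := mem_ncPartitions.1 hβ
  rw [← prod_congr rfl fun W hW => card_ncIrreducible_eq_catalan (hβp.nonempty hW), ← card_pi]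
  refine card_nbij' (fun α W _ => restrictL α W) (blockwiseUnion β)
    (fun α hα => ?_) (fun p hp => ?_) (fun α hα => ?_) (fun p hp => ?_)
  · obtain ⟨hα, hαβ, hspan⟩ := mem_filter.1 (mem_coe.1 hα)
    obtain ⟨hαp, hαnc⟩ := mem_ncPartitions.1 hα
    refine mem_pi.2 fun W hW => mem_filter.2 ⟨mem_ncPartitions.2
      ⟨hαp.restrict_of_refines hβp hαβ hW, not_isCrossing_of_subset hαnc (filter_subset _ α)⟩, ?_⟩
    obtain ⟨V, hV, hminV, hmaxV⟩ := hspan W hW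
    obtain ⟨W', hW', hVW'⟩ := hαβ V hV
    obtain rfl := hβp.eq_of_mem hW' hW (hVW' hminV) (fmin_mem (hβp.nonempty hW))
    exact ⟨V, mem_filter.2 ⟨hV, hVW'⟩, hminV, hmaxV⟩
  · have hp' := fun W hW => mem_filter.1 (mem_pi.1 (mem_coe.1 hp) W hW)
    have hpnc := fun W hW => mem_ncPartitions.1 (hp' W hW).1
    refine mem_filter.2 ⟨mem_ncPartitions.2 ⟨hβp.blockwiseUnion fun W hW => (hpnc W hW).1,
      not_isCrossing_blockwiseUnion hβnc hpnc⟩, fun V hV => ?_, fun W hW => ?_⟩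
    · obtain ⟨W, hW, hV⟩ := mem_blockwiseUnion.1 hV
      exact ⟨W, hW, (hpnc W hW).1.subset hV⟩
    · obtain ⟨B, hB, hspan⟩ := (hp' W hW).2
      exact ⟨B, mem_blockwiseUnion.2 ⟨W, hW, hB⟩, hspan⟩
  · exact blockwiseUnion_restrictL (mem_filter.1 (mem_coe.1 hα)).2.1
  · have hp' := fun W hW => (mem_ncPartitions.1 (mem_filter.1
      (mem_pi.1 (mem_coe.1 hp) W hW)).1).1
    funext W hW
    exact restrictL_blockwiseUnion hβp hp' hW

/-! ### The partitions `β` with `α ≪ β` for a fixed `α` -/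

noncomputable def enclosing (α : Finset (Finset ℕ)) (V : Finset ℕ) : Finset (Finset ℕ) :=
  α.filter fun V' => fmin V' < fmin V ∧ fmax V < fmax V'

theorem mem_enclosing {α : Finset (Finset ℕ)} {V B : Finset ℕ} :
    B ∈ enclosing α V ↔ B ∈ α ∧ fmin B < fmin V ∧ fmax V < fmax B :=
  mem_filter

theorem not_outerBlock_iff {α : Finset (Finset ℕ)} {V : Finset ℕ} :
    ¬OuterBlock α V ↔ (enclosing α V).Nonempty := by
  simp only [OuterBlock, not_forall, not_not, exists_prop, Finset.Nonempty, mem_enclosing]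

theorem mem_enclosing_of_between {F : Finset ℕ} {α : Finset (Finset ℕ)}
    (hp : IsPartitionOfSet F α) (hnc : ¬IsCrossing α) {V W : Finset ℕ} (hV : V ∈ α)
    (hW : W ∈ α) (hne : V ≠ W) {x : ℕ} (hx : x ∈ V) (h₁ : fmin W < x) (h₂ : x < fmax W) :
    W ∈ enclosing α V := by
  have hmin := fmin_mem (hp.nonempty hW)
  have hmax := fmax_mem (hp.nonempty hW)
  have hbetween : ∀ y ∈ V, fmin W < y ∧ y < fmax W := by
    intro y hy
    have hy₁ : y ≠ fmin W := fun h => hne (hp.eq_of_mem hV hW hy (h ▸ hmin))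
    have hy₂ : y ≠ fmax W := fun h => hne (hp.eq_of_mem hV hW hy (h ▸ hmax))
    constructor
    · refine lt_of_not_ge fun hle => hnc ⟨V, hV, W, hW, hne, y, hy, _, hmin, x, hx, _, hmax,
        lt_of_le_of_ne hle hy₁, h₁, h₂⟩
    · refine lt_of_not_ge fun hle => hnc ⟨W, hW, V, hV, hne.symm, _, hmin, x, hx, _, hmax, y, hy,
        h₁, h₂, lt_of_le_of_ne hle hy₂.symm⟩
  exact mem_enclosing.2 ⟨hW, (hbetween _ (fmin_mem (hp.nonempty hV))).1,
    (hbetween _ (fmax_mem (hp.nonempty hV))).2⟩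

section leader

variable {F : Finset ℕ} {α S : Finset (Finset ℕ)}

noncomputable def candidates (α S : Finset (Finset ℕ)) (V : Finset ℕ) :
    Finset (Finset ℕ) :=
  (insert V (enclosing α V)).filter (· ∉ S)

-- The candidates are nested, so the one with the largest minimum is the innermost.
noncomputable def leader (α S : Finset (Finset ℕ)) (V : Finset ℕ) : Finset ℕ :=
  blockOf α (fmax ((candidates α S V).image fmin))

theorem mem_candidates {V B : Finset ℕ} :
    B ∈ candidates α S V ↔ (B = V ∨ B ∈ enclosing α V) ∧ B ∉ S := by
  rw [candidates, mem_filter, mem_insert]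

theorem mem_of_mem_candidates {V B : Finset ℕ} (hV : V ∈ α) (hB : B ∈ candidates α S V) :
    B ∈ α := by
  rcases (mem_candidates.1 hB).1 with rfl | hB
  exacts [hV, (mem_enclosing.1 hB).1]

theorem candidates_nonempty (hS : S ⊆ α.filter fun V => ¬OuterBlock α V) (V : Finset ℕ) :
    (candidates α S V).Nonempty := by
  induction hn : fmin V using Nat.strong_induction_on generalizing V with
  | _ n ih =>
    by_cases hVS : V ∈ S
    · obtain ⟨E, hE⟩ := not_outerBlock_iff.1 (mem_filter.1 (hS hVS)).2
      obtain ⟨hEα, hE₁, hE₂⟩ := mem_enclosing.1 hE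
      obtain ⟨B, hB⟩ := ih _ (hn ▸ hE₁) E rfl
      refine ⟨B, mem_candidates.2 ⟨Or.inr ?_, (mem_candidates.1 hB).2⟩⟩
      rcases (mem_candidates.1 hB).1 with rfl | hB
      · exact hE
      · obtain ⟨hBα, hB₁, hB₂⟩ := mem_enclosing.1 hB
        exact mem_enclosing.2 ⟨hBα, hB₁.trans hE₁, hE₂.trans hB₂⟩
    · exact ⟨V, mem_candidates.2 ⟨Or.inl rfl, hVS⟩⟩

theorem leader_eq (hp : IsPartitionOfSet F α) {V B₀ : Finset ℕ} (hV : V ∈ α)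
    (hB₀ : B₀ ∈ candidates α S V) (hmax : ∀ B ∈ candidates α S V, fmin B ≤ fmin B₀) :
    leader α S V = B₀ := by
  have hB₀α := mem_of_mem_candidates hV hB₀
  rw [leader, fmax_eq_of_mem (mem_image_of_mem fmin hB₀) (forall_mem_image.2 hmax)]
  exact hp.blockOf_eq hB₀α (fmin_mem (hp.nonempty hB₀α))

theorem leader_spec (hp : IsPartitionOfSet F α) (hS : S ⊆ α.filter fun V => ¬OuterBlock α V)
    {V : Finset ℕ} (hV : V ∈ α) :
    leader α S V ∈ candidates α S V ∧ ∀ B ∈ candidates α S V, fmin B ≤ fmin (leader α S V) := by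
  obtain ⟨B₀, hB₀, hfB₀⟩ := mem_image.1 (fmax_mem ((candidates_nonempty hS V).image fmin))
  have hmax : ∀ B ∈ candidates α S V, fmin B ≤ fmin B₀ :=
    fun B hB => hfB₀ ▸ le_fmax (mem_image_of_mem fmin hB)
  rw [leader_eq hp hV hB₀ hmax]
  exact ⟨hB₀, hmax⟩

theorem leader_mem (hp : IsPartitionOfSet F α) (hS : S ⊆ α.filter fun V => ¬OuterBlock α V)
    {V : Finset ℕ} (hV : V ∈ α) : leader α S V ∈ α :=
  mem_of_mem_candidates hV (leader_spec hp hS hV).1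

theorem leader_notMem (hp : IsPartitionOfSet F α) (hS : S ⊆ α.filter fun V => ¬OuterBlock α V)
    {V : Finset ℕ} (hV : V ∈ α) : leader α S V ∉ S :=
  (mem_candidates.1 (leader_spec hp hS hV).1).2

theorem leader_of_notMem (hp : IsPartitionOfSet F α) {A : Finset ℕ} (hA : A ∈ α)
    (hAS : A ∉ S) : leader α S A = A :=
  leader_eq hp hA (mem_candidates.2 ⟨Or.inl rfl, hAS⟩) fun B hB => by
    rcases (mem_candidates.1 hB).1 with rfl | hB
    exacts [le_rfl, (mem_enclosing.1 hB).2.1.le]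

theorem leader_span (hp : IsPartitionOfSet F α) (hS : S ⊆ α.filter fun V => ¬OuterBlock α V)
    {V : Finset ℕ} (hV : V ∈ α) :
    fmin (leader α S V) ≤ fmin V ∧ fmax V ≤ fmax (leader α S V) := by
  rcases (mem_candidates.1 (leader_spec hp hS hV).1).1 with h | h
  · rw [h]
    exact ⟨le_rfl, le_rfl⟩
  · exact ⟨(mem_enclosing.1 h).2.1.le, (mem_enclosing.1 h).2.2.le⟩

theorem fmin_le_fmin_leader (hp : IsPartitionOfSet F α) (hnc : ¬IsCrossing α)
    (hS : S ⊆ α.filter fun V => ¬OuterBlock α V) {U A : Finset ℕ} (hU : U ∈ α) (hA : A ∈ α)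
    (hAS : A ∉ S) (hUA : U ≠ A) {x : ℕ} (hxU : x ∈ U) (h₁ : fmin A < x) (h₂ : x < fmax A) :
    fmin A ≤ fmin (leader α S U) :=
  (leader_spec hp hS hU).2 A
    (mem_candidates.2 ⟨Or.inr (mem_enclosing_of_between hp hnc hU hA hUA hxU h₁ h₂), hAS⟩)

end leader

section merge

variable {F : Finset ℕ} {α S : Finset (Finset ℕ)}

noncomputable def merged (α S : Finset (Finset ℕ)) (A : Finset ℕ) : Finset ℕ :=
  (α.filter fun U => leader α S U = A).biUnion id

noncomputable def mergeAlong (α S : Finset (Finset ℕ)) : Finset (Finset ℕ) :=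
  α.image fun V => merged α S (leader α S V)

theorem mem_merged {A : Finset ℕ} {x : ℕ} :
    x ∈ merged α S A ↔ ∃ U ∈ α, leader α S U = A ∧ x ∈ U := by
  simp [merged, and_assoc]

theorem subset_merged_leader {V : Finset ℕ} (hV : V ∈ α) : V ⊆ merged α S (leader α S V) :=
  fun _ hx => mem_merged.2 ⟨V, hV, rfl, hx⟩

theorem leader_eq_of_mem_merged (hp : IsPartitionOfSet F α) {U A : Finset ℕ} {x : ℕ}
    (hU : U ∈ α) (hxU : x ∈ U) (hx : x ∈ merged α S A) : leader α S U = A := by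
  obtain ⟨U', hU', rfl, hxU'⟩ := mem_merged.1 hx
  rw [hp.eq_of_mem hU hU' hxU hxU']

theorem mem_merged_bounds (hp : IsPartitionOfSet F α)
    (hS : S ⊆ α.filter fun V => ¬OuterBlock α V) {A : Finset ℕ} {x : ℕ}
    (hx : x ∈ merged α S A) : fmin A ≤ x ∧ x ≤ fmax A := by
  obtain ⟨U, hU, rfl, hxU⟩ := mem_merged.1 hx
  obtain ⟨h₁, h₂⟩ := leader_span hp hS hU
  exact ⟨h₁.trans (fmin_le hxU), (le_fmax hxU).trans h₂⟩

theorem fmin_merged_fmax_merged (hp : IsPartitionOfSet F α)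
    (hS : S ⊆ α.filter fun V => ¬OuterBlock α V) {A : Finset ℕ} (hA : A ∈ α) (hAS : A ∉ S) :
    fmin (merged α S A) = fmin A ∧ fmax (merged α S A) = fmax A := by
  have hsub : A ⊆ merged α S A := by
    simpa only [leader_of_notMem hp hA hAS] using subset_merged_leader (S := S) hA
  exact ⟨fmin_eq_of_mem (hsub (fmin_mem (hp.nonempty hA))) fun x hx =>
      (mem_merged_bounds hp hS hx).1,
    fmax_eq_of_mem (hsub (fmax_mem (hp.nonempty hA))) fun x hx => (mem_merged_bounds hp hS hx).2⟩

theorem IsPartitionOfSet.mergeAlong (hp : IsPartitionOfSet F α) :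
    IsPartitionOfSet F (mergeAlong α S) := by
  simp only [IsPartitionOfSet, _root_.mergeAlong, forall_mem_image]
  refine ⟨fun V hV => (hp.nonempty hV).mono (subset_merged_leader hV), fun V _ x hx => ?_,
    fun m hm => ?_, fun V _ V' _ hne => ?_⟩
  · obtain ⟨U, hU, -, hxU⟩ := mem_merged.1 hx
    exact hp.subset hU hxU
  · obtain ⟨V, hV, hmV⟩ := hp.exists_mem hm
    exact ⟨_, mem_image_of_mem _ hV, subset_merged_leader hV hmV⟩
  · refine eq_empty_of_forall_notMem fun x hx => hne ?_
    obtain ⟨hx₁, hx₂⟩ := mem_inter.1 hx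
    obtain ⟨U, hU, -, hxU⟩ := mem_merged.1 hx₁
    rw [← leader_eq_of_mem_merged hp hU hxU hx₁, ← leader_eq_of_mem_merged hp hU hxU hx₂]

theorem not_isCrossing_mergeAlong (hp : IsPartitionOfSet F α) (hnc : ¬IsCrossing α)
    (hS : S ⊆ α.filter fun V => ¬OuterBlock α V) : ¬IsCrossing (mergeAlong α S) := by
  rintro ⟨_, hW₁, _, hW₂, hne, a, ha, b, hb, c, hc, d, hd, hab, hbc, hcd⟩
  obtain ⟨V₁, hV₁, rfl⟩ := mem_image.1 hW₁
  obtain ⟨V₂, hV₂, rfl⟩ := mem_image.1 hW₂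
  have hA₁ := leader_mem hp hS hV₁
  have hA₂ := leader_mem hp hS hV₂
  have hA₁S := leader_notMem hp hS hV₁
  have hA₂S := leader_notMem hp hS hV₂
  have hA : leader α S V₁ ≠ leader α S V₂ := fun h => hne (h ▸ rfl)
  have ha' := mem_merged_bounds hp hS ha
  have hb' := mem_merged_bounds hp hS hb
  have hc' := mem_merged_bounds hp hS hc
  have hd' := mem_merged_bounds hp hS hd
  -- the middle point of the crossing lies strictly inside the span of the other leader
  rcases lt_or_gt_of_ne fun h => hA (hp.eq_of_fmin_eq hA₁ hA₂ h) with hlt | hlt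
  · obtain ⟨U, hU, hUA, hcU⟩ := mem_merged.1 hc
    have hUA₂ : U ≠ leader α S V₂ := by
      rintro rfl
      exact hA (hUA.symm.trans (leader_of_notMem hp hA₂ hA₂S))
    have := fmin_le_fmin_leader hp hnc hS hU hA₂ hA₂S hUA₂ hcU (by omega) (by omega)
    rw [hUA] at this
    omega
  · obtain ⟨U, hU, hUA, hbU⟩ := mem_merged.1 hb
    have hUA₁ : U ≠ leader α S V₁ := by
      rintro rfl
      exact hA ((leader_of_notMem hp hA₁ hA₁S).symm.trans hUA)
    have := fmin_le_fmin_leader hp hnc hS hU hA₁ hA₁S hUA₁ hbU (by omega) (by omega)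
    rw [hUA] at this
    omega

theorem LL_mergeAlong (hp : IsPartitionOfSet F α) (hS : S ⊆ α.filter fun V => ¬OuterBlock α V) :
    LL α (mergeAlong α S) := by
  refine ⟨fun V hV => ⟨_, mem_image_of_mem _ hV, subset_merged_leader hV⟩, fun W hW => ?_⟩
  obtain ⟨V, hV, rfl⟩ := mem_image.1 hW
  have hA := leader_mem hp hS hV
  obtain ⟨hmin, hmax⟩ := fmin_merged_fmax_merged hp hS hA (leader_notMem hp hS hV)
  exact ⟨_, hA, hmin ▸ fmin_mem (hp.nonempty hA), hmax ▸ fmax_mem (hp.nonempty hA)⟩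

end merge

noncomputable def subordinate (α β : Finset (Finset ℕ)) : Finset (Finset ℕ) :=
  α.filter fun V => ∃ W ∈ β, V ⊆ W ∧ fmin W ∉ V

section subordinate

variable {F : Finset ℕ} {α β : Finset (Finset ℕ)}

theorem subordinate_subset_inner (hp : IsPartitionOfSet F α) (hLL : LL α β) :
    subordinate α β ⊆ α.filter fun V => ¬OuterBlock α V := by
  intro V hV
  obtain ⟨hVα, W, hW, hVW, hminW⟩ := mem_filter.1 hV
  obtain ⟨V₀, hV₀, hmin₀, hmax₀⟩ := hLL.2 W hW
  have hVne := hp.nonempty hVα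
  have hV₀V : V₀ ≠ V := fun h => hminW (h ▸ hmin₀)
  have h₁ : fmin V₀ < fmin V := (fmin_le hmin₀).trans_lt <|
    (fmin_le (hVW (fmin_mem hVne))).lt_of_ne fun h => hminW (h ▸ fmin_mem hVne)
  have h₂ : fmax V < fmax V₀ := ((le_fmax (hVW (fmax_mem hVne))).lt_of_ne fun h =>
    hV₀V (hp.eq_of_mem hV₀ hVα hmax₀ (h ▸ fmax_mem hVne))).trans_le (le_fmax hmax₀)
  exact mem_filter.2 ⟨hVα, not_outerBlock_iff.2 ⟨V₀, mem_enclosing.2 ⟨hV₀, h₁, h₂⟩⟩⟩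

theorem LL.subset_and_fmax_mem (hp : IsPartitionOfSet F α) (hβ : IsPartitionOfSet F β)
    (hLL : LL α β) {W V₀ : Finset ℕ} (hW : W ∈ β) (hV₀ : V₀ ∈ α) (hfV₀ : fmin W ∈ V₀) :
    V₀ ⊆ W ∧ fmax W ∈ V₀ := by
  obtain ⟨W', hW', hV₀W'⟩ := hLL.1 V₀ hV₀
  obtain ⟨V₁, hV₁, hmin₁, hmax₁⟩ := hLL.2 W hW
  obtain rfl := hβ.eq_of_mem hW' hW (hV₀W' hfV₀) (fmin_mem (hβ.nonempty hW))
  exact ⟨hV₀W', hp.eq_of_mem hV₁ hV₀ hmin₁ hfV₀ ▸ hmax₁⟩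

theorem mem_candidates_subordinate (hp : IsPartitionOfSet F α) (hβ : IsPartitionOfSet F β)
    (hLL : LL α β) {V W V₀ : Finset ℕ} (hV : V ∈ α) (hW : W ∈ β) (hVW : V ⊆ W) (hV₀ : V₀ ∈ α)
    (hfV₀ : fmin W ∈ V₀) : V₀ ∈ candidates α (subordinate α β) V := by
  obtain ⟨hV₀W, hmaxV₀⟩ := hLL.subset_and_fmax_mem hp hβ hW hV₀ hfV₀
  have hVne := hp.nonempty hV
  refine mem_candidates.2 ⟨?_, fun hsub => ?_⟩
  · by_cases hVV₀ : V₀ = V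
    · exact Or.inl hVV₀
    have hminV₀ : fmin V₀ = fmin W := fmin_eq_of_mem hfV₀ fun x hx => fmin_le (hV₀W hx)
    have hmaxV₀' : fmax V₀ = fmax W := fmax_eq_of_mem hmaxV₀ fun x hx => le_fmax (hV₀W hx)
    refine Or.inr (mem_enclosing.2 ⟨hV₀, ?_, ?_⟩)
    · exact hminV₀ ▸ (fmin_le (hVW (fmin_mem hVne))).lt_of_ne fun h =>
        hVV₀ (hp.eq_of_mem hV₀ hV hfV₀ (h ▸ fmin_mem hVne))
    · exact hmaxV₀' ▸ (le_fmax (hVW (fmax_mem hVne))).lt_of_ne fun h =>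
        hVV₀ (hp.eq_of_mem hV₀ hV hmaxV₀ (h ▸ fmax_mem hVne))
  · obtain ⟨-, W', hW', hV₀W', hmin'⟩ := mem_filter.1 hsub
    exact hmin' (hβ.eq_of_subset (hp.nonempty hV₀) hW hW' hV₀W hV₀W' ▸ hfV₀)

theorem fmin_le_of_mem_candidates_subordinate (hp : IsPartitionOfSet F α)
    (hβ : IsPartitionOfSet F β) (hβnc : ¬IsCrossing β) (hLL : LL α β) {V W B : Finset ℕ}
    (hV : V ∈ α) (hW : W ∈ β) (hVW : V ⊆ W) (hB : B ∈ candidates α (subordinate α β) V) :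
    fmin B ≤ fmin W := by
  obtain ⟨hBV, hBS⟩ := mem_candidates.1 hB
  have hBα := mem_of_mem_candidates hV hB
  have hVne := hp.nonempty hV
  obtain ⟨W', hW', hBW'⟩ := hLL.1 B hBα
  have hfB : fmin W' ∈ B := by_contra fun h => hBS (mem_filter.2 ⟨hBα, W', hW', hBW', h⟩)
  rcases hBV with rfl | hBenc
  · obtain rfl := hβ.eq_of_subset hVne hW' hW hBW' hVW
    exact fmin_le hfB
  refine not_lt.1 fun hlt => ?_
  obtain ⟨-, hB₁, hB₂⟩ := mem_enclosing.1 hBenc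
  have hWW' : W ≠ W' := by
    rintro rfl
    exact absurd (fmin_le hfB) (not_le.2 hlt)
  have hBne := hp.nonempty hBα
  exact hβnc ⟨W, hW, W', hW', hWW', _, fmin_mem (hβ.nonempty hW), _, hBW' (fmin_mem hBne),
    _, hVW (fmin_mem hVne), _, hBW' (fmax_mem hBne), hlt, hB₁,
    (le_fmax (fmin_mem hVne)).trans_lt hB₂⟩

theorem leader_subordinate (hp : IsPartitionOfSet F α) (hβ : IsPartitionOfSet F β)
    (hβnc : ¬IsCrossing β) (hLL : LL α β) {V W V₀ : Finset ℕ} (hV : V ∈ α) (hW : W ∈ β)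
    (hVW : V ⊆ W) (hV₀ : V₀ ∈ α) (hfV₀ : fmin W ∈ V₀) :
    leader α (subordinate α β) V = V₀ := by
  have hminV₀ : fmin V₀ = fmin W := fmin_eq_of_mem hfV₀ fun x hx =>
    fmin_le ((hLL.subset_and_fmax_mem hp hβ hW hV₀ hfV₀).1 hx)
  exact leader_eq hp hV (mem_candidates_subordinate hp hβ hLL hV hW hVW hV₀ hfV₀) fun B hB =>
    hminV₀ ▸ fmin_le_of_mem_candidates_subordinate hp hβ hβnc hLL hV hW hVW hB

theorem merged_leader_subordinate (hp : IsPartitionOfSet F α) (hβ : IsPartitionOfSet F β)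
    (hβnc : ¬IsCrossing β) (hLL : LL α β) {V W : Finset ℕ} (hV : V ∈ α) (hW : W ∈ β)
    (hVW : V ⊆ W) : merged α (subordinate α β) (leader α (subordinate α β) V) = W := by
  have hleader : ∀ {U W' V₁}, U ∈ α → W' ∈ β → U ⊆ W' → V₁ ∈ α → fmin W' ∈ V₁ →
      leader α (subordinate α β) U = V₁ := leader_subordinate hp hβ hβnc hLL
  obtain ⟨V₀, hV₀, hfV₀, -⟩ := hLL.2 W hW
  rw [hleader hV hW hVW hV₀ hfV₀]
  ext x
  rw [mem_merged]
  constructor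
  · rintro ⟨U, hU, hUV₀, hxU⟩
    obtain ⟨W', hW', hUW'⟩ := hLL.1 U hU
    obtain ⟨V₁, hV₁, hfV₁, -⟩ := hLL.2 W' hW'
    rw [hleader hU hW' hUW' hV₁ hfV₁] at hUV₀
    subst hUV₀
    obtain rfl : W' = W := hβ.eq_of_mem hW' hW (fmin_mem (hβ.nonempty hW'))
      ((hLL.subset_and_fmax_mem hp hβ hW hV₁ hfV₀).1 hfV₁)
    exact hUW' hxU
  · intro hx
    obtain ⟨U, hU, hxU⟩ := hp.exists_mem (hβ.subset hW hx)
    obtain ⟨W', hW', hUW'⟩ := hLL.1 U hU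
    obtain rfl := hβ.eq_of_mem hW' hW (hUW' hxU) hx
    exact ⟨U, hU, hleader hU hW' hUW' hV₀ hfV₀, hxU⟩

theorem mergeAlong_subordinate (hp : IsPartitionOfSet F α) (hβ : IsPartitionOfSet F β)
    (hβnc : ¬IsCrossing β) (hLL : LL α β) : mergeAlong α (subordinate α β) = β := by
  ext W
  rw [mergeAlong, mem_image]
  constructor
  · rintro ⟨V, hV, rfl⟩
    obtain ⟨W, hW, hVW⟩ := hLL.1 V hV
    rwa [merged_leader_subordinate hp hβ hβnc hLL hV hW hVW]
  · intro hW
    obtain ⟨x, hx⟩ := hβ.nonempty hW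
    obtain ⟨V, hV, hxV⟩ := hp.exists_mem (hβ.subset hW hx)
    obtain ⟨W', hW', hVW'⟩ := hLL.1 V hV
    obtain rfl := hβ.eq_of_mem hW' hW (hVW' hxV) hx
    exact ⟨V, hV, merged_leader_subordinate hp hβ hβnc hLL hV hW' hVW'⟩

end subordinate

theorem subordinate_mergeAlong {F : Finset ℕ} {α S : Finset (Finset ℕ)}
    (hp : IsPartitionOfSet F α) (hS : S ⊆ α.filter fun V => ¬OuterBlock α V) :
    subordinate α (mergeAlong α S) = S := by
  ext V
  rw [subordinate, mem_filter]
  constructor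
  · rintro ⟨hV, _, hW, hVW, hmin⟩
    obtain ⟨V', -, rfl⟩ := mem_image.1 hW
    obtain ⟨x, hx⟩ := hp.nonempty hV
    rw [← leader_eq_of_mem_merged hp hV hx (hVW hx)] at hmin
    by_contra hVS
    rw [leader_of_notMem hp hV hVS, (fmin_merged_fmax_merged hp hS hV hVS).1] at hmin
    exact hmin (fmin_mem (hp.nonempty hV))
  · intro hVS
    have hV := (mem_filter.1 (hS hVS)).1
    refine ⟨hV, _, mem_image_of_mem _ hV, subset_merged_leader hV, ?_⟩
    rw [(fmin_merged_fmax_merged hp hS (leader_mem hp hS hV) (leader_notMem hp hS hV)).1]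
    have hne : leader α S V ≠ V := fun h => leader_notMem hp hS hV (by rwa [h])
    have henc := (mem_candidates.1 (leader_spec hp hS hV).1).1.resolve_left hne
    exact fun h => absurd (fmin_le h) (not_le.2 (mem_enclosing.1 henc).2.1)

theorem card_filter_LL_left {F : Finset ℕ} {α : Finset (Finset ℕ)} (hα : α ∈ ncPartitions F) :
    #((ncPartitions F).filter fun β => LL α β) = 2 ^ #(α.filter fun V => ¬OuterBlock α V) := by
  obtain ⟨hp, hnc⟩ := mem_ncPartitions.1 hα
  rw [← card_powerset]
  refine card_nbij' (subordinate α) (mergeAlong α) (fun β hβ => ?_) (fun S hS => ?_)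
    (fun β hβ => ?_) (fun S hS => ?_)
  · exact mem_powerset.2 (subordinate_subset_inner hp (mem_filter.1 (mem_coe.1 hβ)).2)
  · have hS := mem_powerset.1 (mem_coe.1 hS)
    exact mem_filter.2 ⟨mem_ncPartitions.2 ⟨hp.mergeAlong, not_isCrossing_mergeAlong hp hnc hS⟩,
      LL_mergeAlong hp hS⟩
  · obtain ⟨hβ, hLL⟩ := mem_filter.1 (mem_coe.1 hβ)
    obtain ⟨hβp, hβnc⟩ := mem_ncPartitions.1 hβ
    exact mergeAlong_subordinate hp hβp hβnc hLL
  · exact subordinate_mergeAlong hp (mem_powerset.1 (mem_coe.1 hS))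

theorem mem_NCF {n : ℕ} {α : Finset (Finset ℕ)} : α ∈ NCF n ↔ IsNCPartition n α := by
  rw [NCF_eq_ncPartitions, mem_ncPartitions]
  rfl

theorem ncard_setOf_LL (n : ℕ) :
    {p : Finset (Finset ℕ) × Finset (Finset ℕ) |
        IsNCPartition n p.1 ∧ IsNCPartition n p.2 ∧ LL p.1 p.2}.ncard
      = ∑ α ∈ NCF n, #((NCF n).filter fun β => LL α β) := by
  have hset : {p : Finset (Finset ℕ) × Finset (Finset ℕ) |
      IsNCPartition n p.1 ∧ IsNCPartition n p.2 ∧ LL p.1 p.2} =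
        ↑((NCF n ×ˢ NCF n).filter fun p => LL p.1 p.2) := by
    ext p
    simp [mem_NCF, and_assoc]
  rw [hset, Set.ncard_coe_finset, card_filter, sum_product]
  simp only [card_filter]

theorem stmt12_general (n : ℕ) :
    {p : Finset (Finset ℕ) × Finset (Finset ℕ) |
        IsNCPartition n p.1 ∧ IsNCPartition n p.2 ∧ LL p.1 p.2}.ncard
      = ∑ α ∈ NCF n, 2 ^ (α.filter fun V => ¬ OuterBlock α V).card ∧
    ∑ α ∈ NCF n, 2 ^ (α.filter fun V => ¬ OuterBlock α V).card
      = ∑ β ∈ NCF n, ∏ W ∈ β, catalan (W.card - 1) := by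
  have hleft : ∀ α ∈ NCF n, #((NCF n).filter fun β => LL α β) =
      2 ^ #(α.filter fun V => ¬OuterBlock α V) := fun α hα => by
    rw [NCF_eq_ncPartitions] at hα ⊢
    exact card_filter_LL_left hα
  have hright : ∀ β ∈ NCF n, #((NCF n).filter fun α => LL α β) = ∏ W ∈ β, catalan (#W - 1) :=
    fun β hβ => by
      rw [NCF_eq_ncPartitions] at hβ ⊢
      exact card_filter_LL_right hβ
  rw [← sum_congr rfl hleft, ← sum_congr rfl hright]
  exact ⟨ncard_setOf_LL n, sum_card_bipartiteAbove_eq_sum_card_bipartiteBelow LL⟩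

/-- For every positive integer `n`, the cardinality of
`{(α, β) : α, β ∈ NC(n), α ≪ β}` equals `Σ_{α ∈ NC(n)} 2^{i(α)}` where `i(α)` is the
number of inner blocks of `α`; consequently
`Σ_{α ∈ NC(n)} 2^{i(α)} = Σ_{β ∈ NC(n)} ∏_{W block of β} Cat_{|W| - 1}`. -/
theorem stmt12 (n : ℕ) (hn : 0 < n) :
    {p : Finset (Finset ℕ) × Finset (Finset ℕ) |
        IsNCPartition n p.1 ∧ IsNCPartition n p.2 ∧ LL p.1 p.2}.ncard
      = ∑ α ∈ NCF n, 2 ^ (α.filter fun V => ¬ OuterBlock α V).card ∧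
    ∑ α ∈ NCF n, 2 ^ (α.filter fun V => ¬ OuterBlock α V).card
      = ∑ β ∈ NCF n, ∏ W ∈ β, catalan (W.card - 1) :=
  stmt12_general n
end

section
/- Let π ∈ NCL(n), put α := π° and β := π̂ (so α ≪ β in NC(n)). Then for any sequence (t_k)_{k ≥ 0} in a commutative ring: ∏_{A block of π} t_{|A|−1} = (∏_{U β-special block of α} t_{|U|−1}) · (∏_{V block of α that is not β-special} t_{|V|}). -/
open scoped Classical

/-!
A block `A` of `π` yields the block `P⁻¹(Ǎ)` of `π°`, where `Ǎ = A` if `min A` is singly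
covered and `Ǎ = A \ {min A}` otherwise; `A ↦ P⁻¹(Ǎ)` is injective on `π` and `|P⁻¹(Ǎ)| = |Ǎ|`.
So it suffices that `P⁻¹(Ǎ)` is `π̂`-special exactly when `min A` is singly covered.

Let `W` be the block of `π̂` containing `A`. If `min A` is singly covered, every block of `W`
descends from `A` by repeatedly passing to a block whose minimum lies in the current one, so
`min A = min W`, and `A` also contains the second smallest element of `W`; `P⁻¹` sends these
two elements to `max W` and `min W`. Conversely, `max W ∈ P⁻¹(Ǎ)` forces `min W ∈ A`, and a
block containing the minimum of its component has a singly covered minimum.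
-/

namespace LinkedPartition

open Finset Relation

section MinMax

variable {A V W : Finset ℕ} {x : ℕ}

theorem fmin_le (hx : x ∈ A) : fmin A ≤ x := Nat.sInf_le hx

theorem fmin_mem (h : A.Nonempty) : fmin A ∈ A := by
  simpa [fmin] using Nat.sInf_mem (s := (A : Set ℕ)) (by simpa using h)

theorem le_fmax (hx : x ∈ A) : x ≤ fmax A := le_csSup A.finite_toSet.bddAbove hx

theorem fmax_mem (h : A.Nonempty) : fmax A ∈ A := by
  simpa [fmax] using Nat.sSup_mem (s := (A : Set ℕ)) (by simpa using h) A.finite_toSet.bddAbove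

theorem fmax_singleton (a : ℕ) : fmax {a} = a := by
  simp [fmax]

theorem fmin_eq_of_subset (hVW : V ⊆ W) (h : fmin W ∈ V) : fmin V = fmin W :=
  le_antisymm (fmin_le h) (fmin_le (hVW (fmin_mem ⟨_, h⟩)))

theorem fmax_eq_of_subset (hVW : V ⊆ W) (h : fmax W ∈ V) : fmax V = fmax W :=
  le_antisymm (le_fmax (hVW (fmax_mem ⟨_, h⟩))) (le_fmax h)

end MinMax

section PrevInBlock

variable {W : Finset ℕ} {m m' s : ℕ}

theorem prevInBlock_fmin : prevInBlock W (fmin W) = fmax W := if_pos rfl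

theorem prevInBlock_mem_and_lt (hm : m ∈ W) (hne : m ≠ fmin W) :
    prevInBlock W m ∈ W ∧ prevInBlock W m < m := by
  have hlt : (W.filter (· < m)).Nonempty :=
    ⟨fmin W, mem_filter.2 ⟨fmin_mem ⟨m, hm⟩, (fmin_le hm).lt_of_ne' hne⟩⟩
  rw [prevInBlock, if_neg hne]
  exact mem_filter.1 (fmax_mem hlt)

theorem prevInBlock_mem (hm : m ∈ W) : prevInBlock W m ∈ W := by
  by_cases hne : m = fmin W
  · exact hne ▸ prevInBlock_fmin (W := W) ▸ fmax_mem ⟨m, hm⟩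
  · exact (prevInBlock_mem_and_lt hm hne).1

theorem le_prevInBlock (hm : m ∈ W) (hlt : m < m') : m ≤ prevInBlock W m' := by
  rw [prevInBlock, if_neg ((fmin_le hm).trans_lt hlt).ne']
  exact le_fmax (mem_filter.2 ⟨hm, hlt⟩)

theorem image_prevInBlock_subset {X : Finset ℕ} (hXW : X ⊆ W) : X.image (prevInBlock W) ⊆ W :=
  fun _ hv => by
    obtain ⟨z, hz, rfl⟩ := mem_image.1 hv
    exact prevInBlock_mem (hXW hz)

theorem prevInBlock_eq_fmax_iff (hm : m ∈ W) : prevInBlock W m = fmax W ↔ m = fmin W := by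
  refine ⟨fun he => ?_, fun he => he ▸ prevInBlock_fmin⟩
  by_contra hne
  exact (le_fmax hm).not_gt (he ▸ (prevInBlock_mem_and_lt hm hne).2)

theorem prevInBlock_injOn : Set.InjOn (prevInBlock W) W := by
  intro m hm m' hm' he
  by_contra hne
  wlog hlt : m < m' generalizing m m'
  · exact this hm' hm he.symm (Ne.symm hne) (by omega)
  have hle := le_prevInBlock (W := W) hm hlt
  by_cases hmin : m = fmin W
  · have := (prevInBlock_mem_and_lt hm' (hmin ▸ hlt).ne').2
    rw [← he, hmin, prevInBlock_fmin] at this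
    exact (le_fmax hm').not_gt this
  · exact (prevInBlock_mem_and_lt hm hmin).2.not_ge (he ▸ hle)

theorem prevInBlock_eq_fmin (hs : s ∈ W) (hlt : fmin W < s)
    (hgap : ∀ x ∈ W, fmin W < x → s ≤ x) : prevInBlock W s = fmin W := by
  have hbelow : W.filter (· < s) = {fmin W} := by
    ext x
    simp only [mem_filter, mem_singleton]
    refine ⟨fun ⟨hx, hxs⟩ => ?_, fun hx => hx ▸ ⟨fmin_mem ⟨s, hs⟩, hlt⟩⟩
    by_contra hne
    exact hxs.not_ge (hgap x hx ((fmin_le hx).lt_of_ne' hne))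
  rw [prevInBlock, if_neg hlt.ne', hbelow, fmax_singleton]

end PrevInBlock

section PermOfInv

variable {α : Finset (Finset ℕ)} {V : Finset ℕ} {m : ℕ}

theorem mem_blockOf_self_iff : m ∈ blockOf α m ↔ ∃ V ∈ α, m ∈ V := by
  simp [blockOf, mem_sup]

theorem blockOf_eq (hα : (α : Set (Finset ℕ)).PairwiseDisjoint id) (hV : V ∈ α) (hm : m ∈ V) :
    blockOf α m = V := by
  have hblocks : α.filter (m ∈ ·) = {V} := by
    ext V'
    simp only [mem_filter, mem_singleton]
    exact ⟨fun ⟨hV', hmV'⟩ => hα.elim_finset hV' hV m hmV' hm, fun he => he ▸ ⟨hV, hm⟩⟩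
  rw [blockOf, hblocks, sup_singleton, id]

theorem permOfInv_eq (hα : (α : Set (Finset ℕ)).PairwiseDisjoint id) (hV : V ∈ α) (hm : m ∈ V) :
    permOfInv α m = prevInBlock V m := by
  rw [permOfInv, blockOf_eq hα hV hm, if_pos hm]

theorem permOfInv_of_forall_notMem (hm : ∀ V ∈ α, m ∉ V) : permOfInv α m = m := by
  rw [permOfInv, if_neg]
  simpa [mem_blockOf_self_iff] using hm

theorem permOfInv_injective (hα : (α : Set (Finset ℕ)).PairwiseDisjoint id) :
    Function.Injective (permOfInv α) := by
  have hcases : ∀ m, (∃ V ∈ α, m ∈ V ∧ permOfInv α m = prevInBlock V m) ∨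
      ((∀ V ∈ α, m ∉ V) ∧ permOfInv α m = m) := by
    intro m
    by_cases hm : ∃ V ∈ α, m ∈ V
    · obtain ⟨V, hV, hmV⟩ := hm
      exact .inl ⟨V, hV, hmV, permOfInv_eq hα hV hmV⟩
    · push Not at hm
      exact .inr ⟨hm, permOfInv_of_forall_notMem hm⟩
  intro a b he
  rcases hcases a with ⟨Va, hVa, haV, ha⟩ | ⟨ha', ha⟩ <;>
    rcases hcases b with ⟨Vb, hVb, hbV, hb⟩ | ⟨hb', hb⟩ <;> rw [ha, hb] at he
  · have hVV : Va = Vb := hα.elim_finset hVa hVb _ (prevInBlock_mem haV) (he ▸ prevInBlock_mem hbV)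
    subst hVV
    exact prevInBlock_injOn haV hbV he
  · exact absurd (he ▸ prevInBlock_mem haV) (hb' Va hVa)
  · exact absurd (he ▸ prevInBlock_mem hbV) (ha' Vb hVb)
  · exact he

end PermOfInv

section Components

variable {π : Finset (Finset ℕ)} {A W W' : Finset ℕ} {m x y : ℕ}

def SharesBlock (π : Finset (Finset ℕ)) (a b : ℕ) : Prop := ∃ A ∈ π, a ∈ A ∧ b ∈ A

noncomputable def component (π : Finset (Finset ℕ)) (m : ℕ) : Finset ℕ :=
  (π.sup id).filter fun x => EqvGen (SharesBlock π) m x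

theorem mem_sup_id : x ∈ π.sup id ↔ ∃ A ∈ π, x ∈ A := by
  simp [mem_sup]

theorem mem_component : x ∈ component π m ↔ x ∈ π.sup id ∧ EqvGen (SharesBlock π) m x :=
  mem_filter

theorem self_mem_component (hm : m ∈ π.sup id) : m ∈ component π m :=
  mem_component.2 ⟨hm, .refl m⟩

theorem component_eq_of_mem (hx : x ∈ component π m) : component π x = component π m := by
  have hmx := (mem_component.1 hx).2
  ext y
  simp only [mem_component]
  exact and_congr_right fun _ => ⟨hmx.trans _ _ _, (hmx.symm _ _).trans _ _ _⟩

theorem mem_genPart : W ∈ genPart π ↔ ∃ m ∈ π.sup id, component π m = W :=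
  mem_image

theorem component_mem_genPart (hA : A ∈ π) (hm : m ∈ A) : component π m ∈ genPart π :=
  mem_genPart.2 ⟨m, mem_sup_id.2 ⟨A, hA, hm⟩, rfl⟩

theorem genPart_pairwiseDisjoint : (genPart π : Set (Finset ℕ)).PairwiseDisjoint id := by
  intro W hW W' hW' hne
  obtain ⟨m, -, rfl⟩ := mem_genPart.1 hW
  obtain ⟨m', -, rfl⟩ := mem_genPart.1 hW'
  refine Finset.disjoint_left.2 fun x hx hx' => hne ?_
  rw [← component_eq_of_mem hx, ← component_eq_of_mem hx']

theorem eq_of_mem_genPart (hW : W ∈ genPart π) (hW' : W' ∈ genPart π) (hx : x ∈ W)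
    (hx' : x ∈ W') : W = W' :=
  genPart_pairwiseDisjoint.elim_finset hW hW' x hx hx'

theorem nonempty_of_mem_genPart (hW : W ∈ genPart π) : W.Nonempty := by
  obtain ⟨m, hm, rfl⟩ := mem_genPart.1 hW
  exact ⟨m, self_mem_component hm⟩

theorem exists_mem_of_mem_genPart (hW : W ∈ genPart π) (hx : x ∈ W) : ∃ A ∈ π, x ∈ A := by
  obtain ⟨m, -, rfl⟩ := mem_genPart.1 hW
  exact mem_sup_id.1 (mem_component.1 hx).1

theorem subset_of_mem_genPart (hW : W ∈ genPart π) (hA : A ∈ π) (hy : y ∈ A) (hyW : y ∈ W) :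
    A ⊆ W := by
  obtain ⟨m, -, rfl⟩ := mem_genPart.1 hW
  intro z hz
  exact mem_component.2 ⟨mem_sup_id.2 ⟨A, hA, hz⟩,
    (mem_component.1 hyW).2.trans _ _ _ (.rel _ _ ⟨A, hA, hy, hz⟩)⟩

theorem eqvGen_of_mem_genPart (hW : W ∈ genPart π) (hx : x ∈ W) (hy : y ∈ W) :
    EqvGen (SharesBlock π) x y := by
  obtain ⟨m, -, rfl⟩ := mem_genPart.1 hW
  exact ((mem_component.1 hx).2.symm _ _).trans _ _ _ (mem_component.1 hy).2

end Components

section Covering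

variable {π : Finset (Finset ℕ)} {A : Finset ℕ} {m : ℕ}

theorem singlyCovered_iff (hA : A ∈ π) (hm : m ∈ A) :
    SinglyCovered π m ↔ ∀ B ∈ π, m ∈ B → B = A := by
  have hA' : A ∈ π.filter (m ∈ ·) := mem_filter.2 ⟨hA, hm⟩
  refine ⟨fun hs B hB hmB => card_le_one.1 hs.le B (mem_filter.2 ⟨hB, hmB⟩) A hA', fun h => ?_⟩
  exact card_eq_one.2 ⟨A, eq_singleton_iff_unique_mem.2
    ⟨hA', fun B hB => h B (mem_filter.1 hB).1 (mem_filter.1 hB).2⟩⟩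

theorem exists_ne_mem_of_not_singlyCovered (hA : A ∈ π) (hm : m ∈ A)
    (hs : ¬ SinglyCovered π m) : ∃ B ∈ π, B ≠ A ∧ m ∈ B := by
  simpa [singlyCovered_iff hA hm, and_comm, and_assoc] using hs

end Covering

section Linked

variable {F : Finset ℕ} {π : Finset (Finset ℕ)} {A B C : Finset ℕ} {x : ℕ}

theorem linked_of_mem (h : IsLinkedPartitionOfSet F π) (hA : A ∈ π) (hB : B ∈ π) (hAB : A ≠ B)
    (hxA : x ∈ A) (hxB : x ∈ B) :
    2 ≤ A.card ∧ 2 ≤ B.card ∧ (A ∩ B).card = 1 ∧ fmin A ≠ fmin B ∧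
      ∀ y ∈ A ∩ B, y = fmin A ∨ y = fmin B :=
  (h.2.2.2 A hA B hB hAB).resolve_left fun he =>
    notMem_empty x (he ▸ mem_inter.2 ⟨hxA, hxB⟩)

theorem eq_fmin_xor (h : IsLinkedPartitionOfSet F π) (hA : A ∈ π) (hB : B ∈ π) (hAB : A ≠ B)
    (hxA : x ∈ A) (hxB : x ∈ B) :
    (x = fmin A ∧ x ≠ fmin B) ∨ (x = fmin B ∧ x ≠ fmin A) := by
  obtain ⟨-, -, -, hne, hmin⟩ := linked_of_mem h hA hB hAB hxA hxB
  rcases hmin x (mem_inter.2 ⟨hxA, hxB⟩) with hx | hx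
  · exact .inl ⟨hx, hx ▸ hne⟩
  · exact .inr ⟨hx, hx ▸ hne.symm⟩

theorem eq_or_eq_of_mem_of_mem_of_mem (h : IsLinkedPartitionOfSet F π) (hA : A ∈ π)
    (hB : B ∈ π) (hC : C ∈ π) (hAB : A ≠ B) (hxA : x ∈ A) (hxB : x ∈ B) (hxC : x ∈ C) :
    C = A ∨ C = B := by
  by_contra! hne
  have := eq_fmin_xor h hA hB hAB hxA hxB
  have := eq_fmin_xor h hA hC hne.1.symm hxA hxC
  have := eq_fmin_xor h hB hC hne.2.symm hxB hxC
  omega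

theorem two_le_card_of_not_singlyCovered (h : IsLinkedPartitionOfSet F π) (hA : A ∈ π)
    (hs : ¬ SinglyCovered π (fmin A)) : 2 ≤ A.card := by
  obtain ⟨B, hB, hBA, hmB⟩ := exists_ne_mem_of_not_singlyCovered hA (fmin_mem (h.1 A hA)) hs
  exact (linked_of_mem h hA hB hBA.symm (fmin_mem (h.1 A hA)) hmB).1

theorem singlyCovered_fmin_of_le (h : IsLinkedPartitionOfSet F π) (hA : A ∈ π)
    (hmin : ∀ B ∈ π, fmin A ∈ B → fmin A ≤ fmin B) : SinglyCovered π (fmin A) := by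
  refine (singlyCovered_iff hA (fmin_mem (h.1 A hA))).2 fun B hB hmB => ?_
  by_contra hBA
  exact (linked_of_mem h hA hB (Ne.symm hBA) (fmin_mem (h.1 A hA)) hmB).2.2.2.1
    ((fmin_le hmB).antisymm (hmin B hB hmB)).symm

end Linked

section Descendants

variable {F : Finset ℕ} {π : Finset (Finset ℕ)} {A B C D W : Finset ℕ} {x y : ℕ}

def IsParentBlock (π : Finset (Finset ℕ)) (P C : Finset ℕ) : Prop :=
  P ∈ π ∧ P ≠ C ∧ fmin C ∈ P

theorem fmin_le_of_descendant (hBC : ReflTransGen (IsParentBlock π) B C) : fmin B ≤ fmin C := by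
  induction hBC with
  | refl => rfl
  | tail _ hparent ih => exact ih.trans (fmin_le hparent.2.2)

/-- A block `C` meeting a descendant `D` of `B` in `y` is a child of `D` if `y = fmin C`;
otherwise `y = fmin D`, and `C` is the parent of `D` (`D ≠ B` as `fmin B` is singly covered). -/
theorem descendant_of_mem_of_mem (h : IsLinkedPartitionOfSet F π) (hB : B ∈ π)
    (hs : SinglyCovered π (fmin B)) (hD : D ∈ π) (hxD : x ∈ D) (hyD : y ∈ D)
    (hx : fmin B ≤ x ∧ ∀ A ∈ π, x ∈ A → ReflTransGen (IsParentBlock π) B A) :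
    fmin B ≤ y ∧ ∀ A ∈ π, y ∈ A → ReflTransGen (IsParentBlock π) B A := by
  have hBD := hx.2 D hD hxD
  refine ⟨(fmin_le_of_descendant hBD).trans (fmin_le hyD), fun C hC hyC => ?_⟩
  by_cases hCD : C = D
  · exact hCD ▸ hBD
  rcases eq_fmin_xor h hC hD hCD hyC hyD with ⟨hy, -⟩ | ⟨hy, -⟩
  · exact hBD.tail ⟨hD, Ne.symm hCD, hy ▸ hyD⟩
  · rcases hBD.cases_tail with rfl | ⟨P, hBP, hP, hPD, hDP⟩
    · exact absurd ((singlyCovered_iff hB (hy ▸ hyD)).1 hs C hC (hy ▸ hyC)) hCD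
    · rcases eq_or_eq_of_mem_of_mem_of_mem h hP hD hC hPD (hy ▸ hDP) hyD hyC with rfl | rfl
      · exact hBP
      · exact absurd rfl hCD

theorem fmin_le_of_eqvGen (h : IsLinkedPartitionOfSet F π) (hB : B ∈ π)
    (hs : SinglyCovered π (fmin B)) (hx : EqvGen (SharesBlock π) (fmin B) x) : fmin B ≤ x := by
  have hbase : fmin B ≤ fmin B ∧ ∀ A ∈ π, fmin B ∈ A → ReflTransGen (IsParentBlock π) B A :=
    ⟨le_rfl, fun A hA hmA =>
      (singlyCovered_iff hB (fmin_mem (h.1 B hB))).1 hs A hA hmA ▸ .refl⟩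
  suffices ∀ a b, EqvGen (SharesBlock π) a b →
      ((fmin B ≤ a ∧ ∀ A ∈ π, a ∈ A → ReflTransGen (IsParentBlock π) B A) ↔
        (fmin B ≤ b ∧ ∀ A ∈ π, b ∈ A → ReflTransGen (IsParentBlock π) B A)) from
    ((this _ _ hx).1 hbase).1
  intro a b hab
  induction hab with
  | rel a b hab =>
    obtain ⟨D, hD, haD, hbD⟩ := hab
    exact ⟨descendant_of_mem_of_mem h hB hs hD haD hbD, descendant_of_mem_of_mem h hB hs hD hbD haD⟩
  | refl => rfl
  | symm _ _ _ ih => exact ih.symm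
  | trans _ _ _ _ _ ih₁ ih₂ => exact ih₁.trans ih₂

theorem fmin_le_of_mem_genPart (h : IsLinkedPartitionOfSet F π) (hB : B ∈ π)
    (hs : SinglyCovered π (fmin B)) (hW : W ∈ genPart π) (hBW : fmin B ∈ W) (hx : x ∈ W) :
    fmin B ≤ x :=
  fmin_le_of_eqvGen h hB hs (eqvGen_of_mem_genPart hW hBW hx)

theorem fmin_genPart_eq (h : IsLinkedPartitionOfSet F π) (hA : A ∈ π)
    (hs : SinglyCovered π (fmin A)) (hW : W ∈ genPart π) (hAW : fmin A ∈ W) :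
    fmin W = fmin A :=
  (fmin_le hAW).antisymm
    (fmin_le_of_mem_genPart h hA hs hW hAW (fmin_mem (nonempty_of_mem_genPart hW)))

end Descendants

section CycledUnlinking

variable {F : Finset ℕ} {π : Finset (Finset ℕ)} {A W : Finset ℕ} {s : ℕ}

/-- A block through `s` other than `A` has minimum `s`; since `s > fmin W`, that minimum is not
singly covered, and the other block through `s` starts at `fmin W = fmin A`. -/
theorem second_mem_of_singlyCovered (h : IsLinkedPartitionOfSet F π) (hA : A ∈ π)
    (hs : SinglyCovered π (fmin A)) (hW : W ∈ genPart π) (hAW : A ⊆ W) (hsW : s ∈ W)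
    (hlt : fmin W < s) (hgap : ∀ x ∈ W, fmin W < x → s ≤ x) : s ∈ A := by
  have hAmin : fmin A ∈ A := fmin_mem (h.1 A hA)
  have hWmin : fmin W = fmin A := fmin_genPart_eq h hA hs hW (hAW hAmin)
  have eq_of_fmin_lt : ∀ C ∈ π, s ∈ C → fmin C < s → C = A := fun C hC hsC hCs => by
    have hCW := subset_of_mem_genPart hW hC hsC hsW
    have hCmin : fmin C = fmin A := by
      by_contra hne
      exact hCs.not_ge (hgap _ (hCW (fmin_mem ⟨s, hsC⟩)) <|
        (fmin_le (hCW (fmin_mem ⟨s, hsC⟩))).lt_of_ne (hWmin ▸ Ne.symm hne))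
    exact (singlyCovered_iff hA hAmin).1 hs C hC (hCmin ▸ fmin_mem ⟨s, hsC⟩)
  obtain ⟨C, hC, hsC⟩ := exists_mem_of_mem_genPart hW hsW
  rcases (fmin_le hsC).lt_or_eq with hCs | hCs
  · exact eq_of_fmin_lt C hC hsC hCs ▸ hsC
  have hsingly : ¬ SinglyCovered π (fmin C) := fun hsC' =>
    hlt.not_ge (hCs ▸ fmin_le_of_mem_genPart h hC hsC' hW (hCs ▸ hsW)
      (fmin_mem (nonempty_of_mem_genPart hW)))
  obtain ⟨C', hC', hC'C, hsC'⟩ :=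
    exists_ne_mem_of_not_singlyCovered hC (fmin_mem ⟨s, hsC⟩) hsingly
  rw [hCs] at hsC'
  have hC's : fmin C' < s := by
    have hne : s ≠ fmin C' := ((eq_fmin_xor h hC hC' hC'C.symm hsC hsC').resolve_right
      fun hx => hx.2 hCs.symm).2
    exact (fmin_le hsC').lt_of_ne hne.symm
  exact eq_of_fmin_lt C' hC' hsC' hC's ▸ hsC'

noncomputable def unlinkBlock (π : Finset (Finset ℕ)) (A : Finset ℕ) : Finset ℕ :=
  if SinglyCovered π (fmin A) then A else A.erase (fmin A)

theorem unlinkBlock_subset : unlinkBlock π A ⊆ A := by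
  unfold unlinkBlock
  split_ifs
  exacts [subset_rfl, erase_subset _ _]

theorem card_unlinkBlock (h : IsLinkedPartitionOfSet F π) (hA : A ∈ π) :
    (unlinkBlock π A).card = if SinglyCovered π (fmin A) then A.card else A.card - 1 := by
  unfold unlinkBlock
  split_ifs
  exacts [rfl, card_erase_of_mem (fmin_mem (h.1 A hA))]

theorem unlinkBlock_nonempty (h : IsLinkedPartitionOfSet F π) (hA : A ∈ π) :
    (unlinkBlock π A).Nonempty := by
  rw [← card_pos, card_unlinkBlock h hA]
  split_ifs with hs
  · exact card_pos.2 (h.1 A hA)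
  · have := two_le_card_of_not_singlyCovered h hA hs
    omega

theorem unlinkBlock_injOn (h : IsLinkedPartitionOfSet F π) : Set.InjOn (unlinkBlock π) π := by
  intro A hA A' hA' he
  by_contra hne
  obtain ⟨x, hx⟩ := unlinkBlock_nonempty h hA
  have hx' : x ∈ unlinkBlock π A' := he ▸ hx
  obtain ⟨hcardA, hcardA', hcard, -, hmin⟩ :=
    linked_of_mem h hA hA' hne (unlinkBlock_subset hx) (unlinkBlock_subset hx')
  have hsub : unlinkBlock π A ⊆ A ∩ A' := fun y hy =>
    mem_inter.2 ⟨unlinkBlock_subset hy, unlinkBlock_subset (he ▸ hy : y ∈ unlinkBlock π A')⟩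
  have hle : (unlinkBlock π A).card ≤ 1 := hcard ▸ card_le_card hsub
  have hle' : (unlinkBlock π A').card ≤ 1 := he ▸ hle
  rw [card_unlinkBlock h hA] at hle
  rw [card_unlinkBlock h hA'] at hle'
  by_cases hs : SinglyCovered π (fmin A)
  · rw [if_pos hs] at hle
    omega
  by_cases hs' : SinglyCovered π (fmin A')
  · rw [if_pos hs'] at hle'
    omega
  rw [unlinkBlock, if_neg hs, mem_erase] at hx
  rw [unlinkBlock, if_neg hs', mem_erase] at hx'
  rcases hmin x (mem_inter.2 ⟨hx.2, hx'.2⟩) with hxA | hxA'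
  exacts [hx.1 hxA, hx'.1 hxA']

noncomputable def cycBlock (π : Finset (Finset ℕ)) (A : Finset ℕ) : Finset ℕ :=
  (unlinkBlock π A).image (permOfInv (genPart π))

theorem cycUnlink_eq_image : cycUnlink π = π.image (cycBlock π) := by
  rw [cycUnlink, mapPart, unlink, image_image]
  rfl

theorem card_cycBlock (h : IsLinkedPartitionOfSet F π) (hA : A ∈ π) :
    (cycBlock π A).card = if SinglyCovered π (fmin A) then A.card else A.card - 1 := by
  rw [cycBlock, card_image_of_injective _ (permOfInv_injective genPart_pairwiseDisjoint),
    card_unlinkBlock h hA]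

theorem cycBlock_injOn (h : IsLinkedPartitionOfSet F π) : Set.InjOn (cycBlock π) π :=
  fun _ hA _ hA' he => unlinkBlock_injOn h hA hA'
    (image_injective (permOfInv_injective genPart_pairwiseDisjoint) he)

theorem cycBlock_eq_image_prevInBlock (hW : W ∈ genPart π) (hAW : A ⊆ W) :
    cycBlock π A = (unlinkBlock π A).image (prevInBlock W) :=
  image_congr fun _ hz => permOfInv_eq genPart_pairwiseDisjoint hW (hAW (unlinkBlock_subset hz))

theorem singlyCovered_of_specialBlock (h : IsLinkedPartitionOfSet F π) (hA : A ∈ π)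
    (hW : W ∈ genPart π) (hAW : A ⊆ W)
    (hsp : SpecialBlock (genPart π) ((unlinkBlock π A).image (prevInBlock W))) :
    SinglyCovered π (fmin A) := by
  obtain ⟨W', hW', hmin, hmax⟩ := hsp
  have hAmin : fmin A ∈ A := fmin_mem (h.1 A hA)
  have hne := (unlinkBlock_nonempty h hA).image (prevInBlock W)
  have hW'W : W' = W := eq_of_mem_genPart hW' hW (hmin ▸ fmin_mem (nonempty_of_mem_genPart hW'))
    (image_prevInBlock_subset (unlinkBlock_subset.trans hAW) (fmin_mem hne))
  rw [hW'W] at hmax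
  obtain ⟨z, hz, hzmax⟩ := mem_image.1 (hmax ▸ fmax_mem hne)
  have hWA : fmin W ∈ A :=
    (prevInBlock_eq_fmax_iff (hAW (unlinkBlock_subset hz))).1 hzmax ▸ unlinkBlock_subset hz
  have hAW' : fmin A = fmin W := (fmin_le hWA).antisymm (fmin_le (hAW hAmin))
  exact singlyCovered_fmin_of_le h hA fun B hB hmB =>
    hAW' ▸ fmin_le (subset_of_mem_genPart hW hB hmB (hAW hAmin) (fmin_mem ⟨_, hmB⟩))

theorem specialBlock_of_singlyCovered (h : IsLinkedPartitionOfSet F π) (hA : A ∈ π)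
    (hW : W ∈ genPart π) (hAW : A ⊆ W) (hs : SinglyCovered π (fmin A)) :
    SpecialBlock (genPart π) (A.image (prevInBlock W)) := by
  have hAmin : fmin A ∈ A := fmin_mem (h.1 A hA)
  have hWmin : fmin W = fmin A := fmin_genPart_eq h hA hs hW (hAW hAmin)
  have hmax : fmax W ∈ A.image (prevInBlock W) :=
    mem_image.2 ⟨fmin A, hAmin, hWmin ▸ prevInBlock_fmin⟩
  have hmin : fmin W ∈ A.image (prevInBlock W) := by
    by_cases hsec : (W.filter (fmin W < ·)).Nonempty
    · obtain ⟨hsW, hlt⟩ := mem_filter.1 (fmin_mem hsec)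
      have hgap : ∀ x ∈ W, fmin W < x → fmin (W.filter (fmin W < ·)) ≤ x :=
        fun x hx hlt => fmin_le (mem_filter.2 ⟨hx, hlt⟩)
      exact mem_image.2 ⟨_, second_mem_of_singlyCovered h hA hs hW hAW hsW hlt hgap,
        prevInBlock_eq_fmin hsW hlt hgap⟩
    · have hWne := nonempty_of_mem_genPart hW
      have hsingleton : fmax W = fmin W := by
        by_contra hne
        exact hsec ⟨fmax W, mem_filter.2 ⟨fmax_mem hWne, (fmin_le (fmax_mem hWne)).lt_of_ne' hne⟩⟩
      exact hsingleton ▸ hmax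
  exact ⟨W, hW, fmin_eq_of_subset (image_prevInBlock_subset hAW) hmin,
    fmax_eq_of_subset (image_prevInBlock_subset hAW) hmax⟩

theorem specialBlock_cycBlock_iff (h : IsLinkedPartitionOfSet F π) (hA : A ∈ π) :
    SpecialBlock (genPart π) (cycBlock π A) ↔ SinglyCovered π (fmin A) := by
  have hAmin : fmin A ∈ A := fmin_mem (h.1 A hA)
  have hW := component_mem_genPart hA hAmin
  have hAW : A ⊆ component π (fmin A) :=
    subset_of_mem_genPart hW hA hAmin (self_mem_component (mem_sup_id.2 ⟨A, hA, hAmin⟩))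
  rw [cycBlock_eq_image_prevInBlock hW hAW]
  refine ⟨singlyCovered_of_specialBlock h hA hW hAW, fun hs => ?_⟩
  rw [unlinkBlock, if_pos hs]
  exact specialBlock_of_singlyCovered h hA hW hAW hs

end CycledUnlinking

end LinkedPartition

/-- Let `π ∈ NCL(n)`, and put `α := π°`, `β := π̂`. Then for any
sequence `(t_k)` in a commutative ring,
`∏_{A block of π} t_{|A|-1} =
  (∏_{U β-special block of α} t_{|U|-1}) · (∏_{V non-β-special block of α} t_{|V|})`. -/
theorem stmt15 {R : Type*} [CommRing R] (t : ℕ → R)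
    (n : ℕ) (π : Finset (Finset ℕ)) (hπ : IsNCL n π) :
    ∏ A ∈ π, t (A.card - 1)
      = (∏ U ∈ (cycUnlink π).filter fun U => SpecialBlock (genPart π) U,
            t (U.card - 1))
        * ∏ V ∈ (cycUnlink π).filter fun V => ¬ SpecialBlock (genPart π) V,
            t V.card := by
  have h := hπ.1
  rw [← Finset.prod_ite, LinkedPartition.cycUnlink_eq_image,
    Finset.prod_image (LinkedPartition.cycBlock_injOn h)]
  refine Finset.prod_congr rfl fun A hA => ?_
  simp only [LinkedPartition.specialBlock_cycBlock_iff h hA, LinkedPartition.card_cycBlock h hA]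
  split_ifs <;> rfl
end
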